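/- arXiv:1902.02213 — 3 statements merged into one kernel-verified Lean document; each statement's English description precedes it below -/
import Mathlib

section
/- Let π ∈ I_n(3412). Then the number of occurrences of the consecutive pattern 123 in π (indices i with π_i < π_{i+1} < π_{i+2}) equals the total number of occurrences in the Motzkin path Ψ(π) of the three-letter factors HHH, HHU, DHH, DHU. -/
open scoped Classical

noncomputable section

/-- Steps of a Motzkin path: up, down, horizontal. -/
inductive Step : Type
  | U : Step
  | D : Step
  | H : Step
  deriving DecidableEq

/-- Steps of a bicolored Motzkin path: up, down, horizontal of color `c₁`,
horizontal of color `c₂`. -/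
inductive CStep : Type
  | U : CStep
  | D : CStep
  | H : CStep
  | Ht : CStep
  deriving DecidableEq

/-- A word over `{U,D,H}` is a Motzkin word if the numbers of `U`'s and `D`'s agree
and every prefix has at least as many `U`'s as `D`'s. -/
def IsMotzkin (w : List Step) : Prop :=
  w.count Step.U = w.count Step.D ∧
  ∀ k, (w.take k).count Step.D ≤ (w.take k).count Step.U

/-- The `y`-coordinate of the lattice point reached after the first `i` steps. -/
def levelAt (w : List Step) (i : ℕ) : ℕ :=
  (w.take i).count Step.U - (w.take i).count Step.D

/-- The height of the `i`-th step (0-indexed): the `y`-coordinate of its ending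
point for a down step, of its starting point otherwise. -/
def heightAt (w : List Step) (i : ℕ) : ℕ :=
  if w.getD i Step.H = Step.D then levelAt w (i + 1) else levelAt w i

/-- Twice the area between the path and the `x`-axis (trapezoid rule). -/
def twoArea (w : List Step) : ℕ :=
  ∑ i ∈ Finset.range w.length, (levelAt w i + levelAt w (i + 1))

/-- The number of occurrences of `p` as a factor (subword of consecutive letters) of `w`. -/
def occFactor (p w : List Step) : ℕ :=
  ((Finset.range w.length).filter fun i => p <+: w.drop i).card

/-- The `y`-coordinate reached after `i` steps, bicolored version. -/
def cLevelAt (w : List CStep) (i : ℕ) : ℕ :=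
  (w.take i).count CStep.U - (w.take i).count CStep.D

/-- The height of the `i`-th step, bicolored version. -/
def cHeightAt (w : List CStep) (i : ℕ) : ℕ :=
  if w.getD i CStep.H = CStep.D then cLevelAt w (i + 1) else cLevelAt w i

/-- A bicolored Motzkin word: a Motzkin word whose horizontal steps have two possible
colors (`H` and `Ht`), horizontal steps at height `0` not being allowed to have the
second color. -/
def IsBicoloredMotzkin (w : List CStep) : Prop :=
  w.count CStep.U = w.count CStep.D ∧
  (∀ k, (w.take k).count CStep.D ≤ (w.take k).count CStep.U) ∧
  (∀ i < w.length, w.getD i CStep.H = CStep.Ht → cHeightAt w i ≠ 0)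

/-- A histoire de Laguerre of length `n`: a bicolored Motzkin path of length `n`
together with a sequence `l` of nonnegative integers such that `l i ≤ h i` for each
step, the inequality being strict for the horizontal steps of the second color
(the "suitable constraints" of De Medicis and Viennot). -/
def IsLaguerre (n : ℕ) (dl : List CStep × List ℕ) : Prop :=
  dl.1.length = n ∧ dl.2.length = n ∧ IsBicoloredMotzkin dl.1 ∧
  ∀ i < n, dl.2.getD i 0 ≤ cHeightAt dl.1 i ∧
    (dl.1.getD i CStep.H = CStep.Ht → dl.2.getD i 0 < cHeightAt dl.1 i)

/-- A labelled Motzkin path of length `n`: a Motzkin path whose down steps carry a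
label not exceeding their height, all other steps carrying the label `0` (unlabelled). -/
def IsLabelledMotzkin (n : ℕ) (dl : List Step × List ℕ) : Prop :=
  dl.1.length = n ∧ dl.2.length = n ∧ IsMotzkin dl.1 ∧
  ∀ i < n, (dl.1.getD i Step.H = Step.D → dl.2.getD i 0 ≤ heightAt dl.1 i) ∧
    (dl.1.getD i Step.H ≠ Step.D → dl.2.getD i 0 = 0)

/-- The embedding of plain Motzkin steps into bicolored steps. -/
def Step.toC : Step → CStep
  | Step.U => CStep.U
  | Step.D => CStep.D
  | Step.H => CStep.H

/-- The value (as a natural number, 0-indexed) of the permutation `π` at the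
(0-indexed) position `i`; junk value `0` out of range. -/
def pv {n : ℕ} (π : Equiv.Perm (Fin n)) (i : ℕ) : ℕ :=
  if h : i < n then (π ⟨i, h⟩ : Fin n).val else 0

/-- Position `p` starts an ascending run of `π` (in one-line notation):
either `p = 0` or there is a descent just before `p`. -/
def RunStartAt {n : ℕ} (π : Equiv.Perm (Fin n)) (p : Fin n) : Prop :=
  ∀ q : Fin n, (q : ℕ) + 1 = (p : ℕ) → π p < π q

/-- Position `p` ends an ascending run of `π`. -/
def RunEndAt {n : ℕ} (π : Equiv.Perm (Fin n)) (p : Fin n) : Prop :=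
  ∀ q : Fin n, (p : ℕ) + 1 = (q : ℕ) → π q < π p

/-- The step of the bicolored Motzkin path `Γ(π)` associated with the value `v`:
`U` if `v` is a head, `D` if it is a tail, `H` if it is a head-tail, `Ht` if it
is a boarder. -/
def gammaStep {n : ℕ} (π : Equiv.Perm (Fin n)) (v : Fin n) : CStep :=
  if RunStartAt π (π.symm v) then
    if RunEndAt π (π.symm v) then CStep.H else CStep.U
  else
    if RunEndAt π (π.symm v) then CStep.D else CStep.Ht

/-- The label of `Γ(π)` at the value `v`: the number of ascending runs of `π`
(determined by the position `pq.1` of their first element and the position `pq.2`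
of their last element) whose first value is `< v`, whose last value is `> v`, and
whose last element precedes `v` in `π`. -/
def gammaLabel {n : ℕ} (π : Equiv.Perm (Fin n)) (v : Fin n) : ℕ :=
  (Finset.univ.filter fun pq : Fin n × Fin n =>
    RunStartAt π pq.1 ∧ RunEndAt π pq.2 ∧ pq.1 ≤ pq.2 ∧
    (∀ r : Fin n, pq.1 ≤ r → r < pq.2 → ¬ RunEndAt π r) ∧
    π pq.1 < v ∧ v < π pq.2 ∧ pq.2 < π.symm v).card

/-- The map `Γ` from permutations to pairs (bicolored Motzkin path, label sequence). -/
def Gamma {n : ℕ} (π : Equiv.Perm (Fin n)) : List CStep × List ℕ :=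
  (List.ofFn fun v => gammaStep π v, List.ofFn fun v => gammaLabel π v)

/-- The (uncolored) Motzkin path `Γ(π)` for permutations with no boarders:
`U` for heads, `D` for tails, `H` for head-tails. -/
def gammaPath {n : ℕ} (π : Equiv.Perm (Fin n)) : List Step :=
  List.ofFn fun v : Fin n =>
    if RunStartAt π (π.symm v) then
      if RunEndAt π (π.symm v) then Step.H else Step.U
    else
      if RunEndAt π (π.symm v) then Step.D else Step.H

/-- `π` is an involution. -/
def IsInvolution {n : ℕ} (π : Equiv.Perm (Fin n)) : Prop :=
  ∀ x, π (π x) = x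

/-- The Motzkin path `Ψ(π)` of an involution `π`: `H` at fixed points, `U` at the
smaller element of a 2-cycle, `D` at the larger element of a 2-cycle. -/
def psiWord {n : ℕ} (π : Equiv.Perm (Fin n)) : List Step :=
  List.ofFn fun v : Fin n =>
    if π v = v then Step.H else if v < π v then Step.U else Step.D

/-- The label of `Ψ(π)` at `v`: if `v` is the larger element of a 2-cycle
`(π v, v)`, the number of 2-cycles `(x, π x)` with `π v < x < v < π x`; `0` otherwise. -/
def psiLabel {n : ℕ} (π : Equiv.Perm (Fin n)) (v : Fin n) : ℕ :=
  if π v < v then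
    (Finset.univ.filter fun x : Fin n => π v < x ∧ x < v ∧ v < π x).card
  else 0

/-- The map `Ψ` from involutions to labelled Motzkin paths. -/
def Psi {n : ℕ} (π : Equiv.Perm (Fin n)) : List Step × List ℕ :=
  (psiWord π, List.ofFn fun v => psiLabel π v)

/-- Number of inversions of `π`. -/
def invCount {n : ℕ} (π : Equiv.Perm (Fin n)) : ℕ :=
  (Finset.univ.filter fun p : Fin n × Fin n => p.1 < p.2 ∧ π p.2 < π p.1).card

/-- Number of coinversions of `π`. -/
def coinvCount {n : ℕ} (π : Equiv.Perm (Fin n)) : ℕ :=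
  (Finset.univ.filter fun p : Fin n × Fin n => p.1 < p.2 ∧ π p.1 < π p.2).card

/-- Number of descents of `π`. -/
def desCount {n : ℕ} (π : Equiv.Perm (Fin n)) : ℕ :=
  ((Finset.range (n - 1)).filter fun i => pv π (i + 1) < pv π i).card

/-- Number of ascents of `π`. -/
def ascCount {n : ℕ} (π : Equiv.Perm (Fin n)) : ℕ :=
  ((Finset.range (n - 1)).filter fun i => pv π i < pv π (i + 1)).card

/-- Number of fixed points of `π`. -/
def fixCount {n : ℕ} (π : Equiv.Perm (Fin n)) : ℕ :=
  (Finset.univ.filter fun i : Fin n => π i = i).card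

/-- Number of occurrences of the consecutive pattern 123 in `π`. -/
def occC123 {n : ℕ} (π : Equiv.Perm (Fin n)) : ℕ :=
  ((Finset.range (n - 2)).filter fun i =>
    pv π i < pv π (i + 1) ∧ pv π (i + 1) < pv π (i + 2)).card

/-- Number of occurrences of the consecutive pattern 132 in `π`. -/
def occC132 {n : ℕ} (π : Equiv.Perm (Fin n)) : ℕ :=
  ((Finset.range (n - 2)).filter fun i =>
    pv π i < pv π (i + 2) ∧ pv π (i + 2) < pv π (i + 1)).card

/-- Number of occurrences of the consecutive pattern 213 in `π`. -/
def occC213 {n : ℕ} (π : Equiv.Perm (Fin n)) : ℕ :=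
  ((Finset.range (n - 2)).filter fun i =>
    pv π (i + 1) < pv π i ∧ pv π i < pv π (i + 2)).card

/-- Number of occurrences of the consecutive pattern 231 in `π`. -/
def occC231 {n : ℕ} (π : Equiv.Perm (Fin n)) : ℕ :=
  ((Finset.range (n - 2)).filter fun i =>
    pv π (i + 2) < pv π i ∧ pv π i < pv π (i + 1)).card

/-- Number of occurrences of the consecutive pattern 312 in `π`. -/
def occC312 {n : ℕ} (π : Equiv.Perm (Fin n)) : ℕ :=
  ((Finset.range (n - 2)).filter fun i =>
    pv π (i + 1) < pv π (i + 2) ∧ pv π (i + 2) < pv π i).card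

/-- Number of occurrences of the consecutive pattern 321 in `π`. -/
def occC321 {n : ℕ} (π : Equiv.Perm (Fin n)) : ℕ :=
  ((Finset.range (n - 2)).filter fun i =>
    pv π (i + 2) < pv π (i + 1) ∧ pv π (i + 1) < pv π i).card

/-- `π` contains the classical pattern 132. -/
def Contains132 {n : ℕ} (π : Equiv.Perm (Fin n)) : Prop :=
  ∃ i j k : Fin n, i < j ∧ j < k ∧ π i < π k ∧ π k < π j

/-- `π` contains the consecutive pattern 123. -/
def ContainsC123 {n : ℕ} (π : Equiv.Perm (Fin n)) : Prop :=
  ∃ i j k : Fin n, (i : ℕ) + 1 = (j : ℕ) ∧ (j : ℕ) + 1 = (k : ℕ) ∧ π i < π j ∧ π j < π k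

/-- `π` contains the classical pattern 3412. -/
def Contains3412 {n : ℕ} (π : Equiv.Perm (Fin n)) : Prop :=
  ∃ i₁ i₂ i₃ i₄ : Fin n, i₁ < i₂ ∧ i₂ < i₃ ∧ i₃ < i₄ ∧
    π i₃ < π i₄ ∧ π i₄ < π i₁ ∧ π i₁ < π i₂

/-- `π` contains the vincular pattern 1-2̲3̲. -/
def Contains1_23 {n : ℕ} (π : Equiv.Perm (Fin n)) : Prop :=
  ∃ i j k : Fin n, i < j ∧ (j : ℕ) + 1 = (k : ℕ) ∧ π i < π j ∧ π j < π k

/-- `π` contains the vincular pattern 1-3̲2̲. -/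
def Contains1_32 {n : ℕ} (π : Equiv.Perm (Fin n)) : Prop :=
  ∃ i j k : Fin n, i < j ∧ (j : ℕ) + 1 = (k : ℕ) ∧ π i < π k ∧ π k < π j

/-- `w` is the one-line notation of a permutation of `{0, …, n-1}`. -/
def IsPermWord (n : ℕ) (w : List ℕ) : Prop :=
  List.Perm w (List.range n)

/-- Position `p` starts an ascending run of the word `w`. -/
def wRunStart (w : List ℕ) (p : ℕ) : Prop :=
  p = 0 ∨ w.getD p 0 < w.getD (p - 1) 0

/-- Position `p` ends an ascending run of the word `w`. -/
def wRunEnd (w : List ℕ) (p : ℕ) : Prop :=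
  p + 1 = w.length ∨ w.getD (p + 1) 0 < w.getD p 0

/-- The step of `Γ(w)` associated with the value `v`. -/
def wGammaStep (w : List ℕ) (v : ℕ) : CStep :=
  if wRunStart w (w.idxOf v) then
    if wRunEnd w (w.idxOf v) then CStep.H else CStep.U
  else
    if wRunEnd w (w.idxOf v) then CStep.D else CStep.Ht

/-- The label of `Γ(w)` at the value `v`. -/
def wGammaLabel (w : List ℕ) (v : ℕ) : ℕ :=
  ((Finset.range w.length ×ˢ Finset.range w.length).filter fun pq =>
    wRunStart w pq.1 ∧ wRunEnd w pq.2 ∧ pq.1 ≤ pq.2 ∧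
    (∀ r, pq.1 ≤ r → r < pq.2 → ¬ wRunEnd w r) ∧
    w.getD pq.1 0 < v ∧ v < w.getD pq.2 0 ∧ pq.2 < w.idxOf v).card

/-- The map `Γ` on one-line words. -/
def wGamma (w : List ℕ) : List CStep × List ℕ :=
  ((List.range w.length).map (wGammaStep w), (List.range w.length).map (wGammaLabel w))

/-- The word `w` contains the vincular pattern 1-2̲3̲. -/
def wContains1_23 (w : List ℕ) : Prop :=
  ∃ i j, i < j ∧ j + 1 < w.length ∧
    w.getD i 0 < w.getD j 0 ∧ w.getD j 0 < w.getD (j + 1) 0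

/-- The word `w` contains the vincular pattern 1-3̲2̲. -/
def wContains1_32 (w : List ℕ) : Prop :=
  ∃ i j, i < j ∧ j + 1 < w.length ∧
    w.getD i 0 < w.getD (j + 1) 0 ∧ w.getD (j + 1) 0 < w.getD j 0

/-- The word `w` contains the classical pattern 132. -/
def wContains132 (w : List ℕ) : Prop :=
  ∃ i j k, i < j ∧ j < k ∧ k < w.length ∧
    w.getD i 0 < w.getD k 0 ∧ w.getD k 0 < w.getD j 0

/-- The word `w` contains the consecutive pattern 123. -/
def wContainsC123 (w : List ℕ) : Prop :=
  ∃ i, i + 2 < w.length ∧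
    w.getD i 0 < w.getD (i + 1) 0 ∧ w.getD (i + 1) 0 < w.getD (i + 2) 0

/-- The one-line word of the Foata image `F(π)` of an involution `π`: write `π` in
standard cycle notation (each cycle with its least element first, cycles in
decreasing order of their least elements) and erase the parentheses. -/
def foataWord {n : ℕ} (π : Equiv.Perm (Fin n)) : List ℕ :=
  (((List.range n).reverse).map fun m =>
    if pv π m = m then [m]
    else if m < pv π m then [m, pv π m]
    else ([] : List ℕ)).flatten

/-- The number of long tunnels of `d`: occurrences of factors `U α D` with `α` a
nonempty Motzkin word. -/
def longTunnelCount (d : List Step) : ℕ :=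
  ((Finset.range d.length ×ˢ Finset.range d.length).filter fun ij =>
    ij.1 + 1 < ij.2 ∧ d.getD ij.1 Step.H = Step.U ∧ d.getD ij.2 Step.H = Step.D ∧
    IsMotzkin ((d.drop (ij.1 + 1)).take (ij.2 - ij.1 - 1))).card

/-- The number of weak valleys of `d`: occurrences of the factors `HH, HU, DH, DU`. -/
def weakValleyCount (d : List Step) : ℕ :=
  occFactor [Step.H, Step.H] d + occFactor [Step.H, Step.U] d +
  occFactor [Step.D, Step.H] d + occFactor [Step.D, Step.U] d

end

/-!
In an involution avoiding 3412, a double ascent `π i < π (i+1) < π (i+2)` forces `i+1` to be a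
fixed point: if `π (i+1) < i+1`, the positions `π i < π (i+1) < i < i+1` carry a 3412, and
symmetrically if `π (i+1) > i+1`. With a fixed middle, the double ascent amounts to
`π i ≤ i` and `i+2 ≤ π (i+2)`, i.e. to the letters of `Ψ(π)` at `i, i+1, i+2` lying in
`{H, D}`, `{H}`, `{H, U}`: these are the four factors `HHH, HHU, DHH, DHU`.
-/

open Finset

theorem sum_occFactor_eq_card {k : ℕ} (S : Finset (List Step)) (hS : ∀ p ∈ S, p.length = k)
    (w : List Step) :
    ∑ p ∈ S, occFactor p w = #{i ∈ range w.length | (w.drop i).take k ∈ S} := by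
  rw [card_eq_sum_card_fiberwise (s := {i ∈ range w.length | (w.drop i).take k ∈ S}) (t := S)
    fun i hi => (mem_filter.1 hi).2]
  refine sum_congr rfl fun p hp => ?_
  rw [filter_filter, occFactor]
  refine congrArg card (filter_congr fun i _ => ?_)
  rw [List.prefix_iff_eq_take, hS p hp]
  constructor
  · rintro rfl
    exact ⟨hp, rfl⟩
  · rintro ⟨-, h⟩
    exact h.symm

theorem List.take_three_drop {α : Type*} (w : List α) {i : ℕ} (hi : i + 2 < w.length) :
    (w.drop i).take 3 = [w[i], w[i + 1], w[i + 2]] := by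
  rw [List.drop_eq_getElem_cons (by omega), List.drop_eq_getElem_cons (by omega),
    List.drop_eq_getElem_cons hi]
  rfl

def risePatterns : Finset (List Step) :=
  {[Step.H, Step.H, Step.H], [Step.H, Step.H, Step.U], [Step.D, Step.H, Step.H],
    [Step.D, Step.H, Step.U]}

theorem mem_risePatterns_iff (x y z : Step) :
    [x, y, z] ∈ risePatterns ↔
      (x = Step.H ∨ x = Step.D) ∧ y = Step.H ∧ (z = Step.H ∨ z = Step.U) := by
  cases x <;> cases y <;> cases z <;> decide

theorem length_of_mem_risePatterns : ∀ p ∈ risePatterns, p.length = 3 := by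
  decide

theorem pv_of_lt {n : ℕ} (π : Equiv.Perm (Fin n)) {i : ℕ} (hi : i < n) :
    pv π i = π ⟨i, hi⟩ :=
  dif_pos hi

section Involution

variable {n : ℕ} {π : Equiv.Perm (Fin n)}

theorem contains3412_of_ascent_of_apply_lt_self (hπ : IsInvolution π) {p q : Fin n}
    (hpq : (p : ℕ) + 1 = q) (hasc : π p < π q) (hq : π q < q) : Contains3412 π := by
  have hqp : π q < p := by
    refine lt_of_le_of_ne (Fin.le_def.2 (by rw [Fin.lt_def] at hq; omega)) fun h => ?_
    have hp : π p = q := by rw [← h, hπ]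
    rw [hp, h] at hasc
    exact absurd hasc (not_lt.2 (Fin.le_def.2 (by omega)))
  refine ⟨π p, π q, p, q, hasc, hqp, Fin.lt_def.2 (by omega), hasc, ?_, ?_⟩
  · rwa [hπ]
  · rw [hπ, hπ]
    exact Fin.lt_def.2 (by omega)

theorem contains3412_of_ascent_of_lt_apply_self (hπ : IsInvolution π) {q r : Fin n}
    (hqr : (q : ℕ) + 1 = r) (hasc : π q < π r) (hq : q < π q) : Contains3412 π := by
  have hrq : r < π q := by
    refine lt_of_le_of_ne (Fin.le_def.2 (by rw [Fin.lt_def] at hq; omega)) fun h => ?_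
    have hr : π r = q := by rw [h, hπ]
    rw [hr, ← h] at hasc
    exact absurd hasc (not_lt.2 (Fin.le_def.2 (by omega)))
  refine ⟨q, r, π q, π r, Fin.lt_def.2 (by omega), hrq, hasc, ?_, ?_, hasc⟩
  · rw [hπ, hπ]
    exact Fin.lt_def.2 (by omega)
  · rwa [hπ]

theorem apply_lt_apply_lt_apply_iff (hπ : IsInvolution π) (h3412 : ¬ Contains3412 π)
    {p q r : Fin n} (hpq : (p : ℕ) + 1 = q) (hqr : (q : ℕ) + 1 = r) :
    π p < π q ∧ π q < π r ↔ π p ≤ p ∧ π q = q ∧ r ≤ π r := by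
  simp only [Fin.lt_def, Fin.le_def, Fin.ext_iff]
  constructor
  · rintro ⟨hasc₁, hasc₂⟩
    have hfix : π q = q := le_antisymm
      (not_lt.1 fun h => h3412 (contains3412_of_ascent_of_lt_apply_self hπ hqr hasc₂ h))
      (not_lt.1 fun h => h3412 (contains3412_of_ascent_of_apply_lt_self hπ hpq hasc₁ h))
    rw [Fin.ext_iff] at hfix
    omega
  · omega

def psiStep (π : Equiv.Perm (Fin n)) (v : Fin n) : Step :=
  if π v = v then Step.H else if v < π v then Step.U else Step.D

theorem psiWord_eq_ofFn_psiStep (π : Equiv.Perm (Fin n)) :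
    psiWord π = List.ofFn (psiStep π) := rfl

theorem psiStep_eq_H_iff {v : Fin n} : psiStep π v = Step.H ↔ π v = v := by
  unfold psiStep
  split_ifs <;> simp_all

theorem psiStep_eq_H_or_D_iff {v : Fin n} :
    psiStep π v = Step.H ∨ psiStep π v = Step.D ↔ π v ≤ v := by
  unfold psiStep
  split_ifs <;> grind

theorem psiStep_eq_H_or_U_iff {v : Fin n} :
    psiStep π v = Step.H ∨ psiStep π v = Step.U ↔ v ≤ π v := by
  unfold psiStep
  split_ifs <;> grind

theorem occC123_at_iff_mem_risePatterns (hπ : IsInvolution π) (h3412 : ¬ Contains3412 π)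
    (i : ℕ) :
    (i < n - 2 ∧ pv π i < pv π (i + 1) ∧ pv π (i + 1) < pv π (i + 2)) ↔
      i < (psiWord π).length ∧ ((psiWord π).drop i).take 3 ∈ risePatterns := by
  by_cases hi : i + 2 < n
  · rw [List.take_three_drop _ (by simpa [psiWord] using hi)]
    simp only [psiWord_eq_ofFn_psiStep, List.getElem_ofFn, mem_risePatterns_iff,
      psiStep_eq_H_or_D_iff, psiStep_eq_H_or_U_iff]
    rw [psiStep_eq_H_iff, pv_of_lt π (by omega), pv_of_lt π (by omega), pv_of_lt π hi,
      ← Fin.lt_def, ← Fin.lt_def, apply_lt_apply_lt_apply_iff hπ h3412 rfl rfl]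
    simp only [show i < n - 2 by omega, List.length_ofFn, show i < n by omega, true_and]
  · refine iff_of_false (by omega) fun ⟨_, hmem⟩ => ?_
    have hlen := length_of_mem_risePatterns _ hmem
    simp only [List.length_take, List.length_drop, psiWord, List.length_ofFn] at hlen
    omega

end Involution

/-- For `π ∈ I_n(3412)`: the number of occurrences of the
consecutive pattern 123 in `π` equals the total number of occurrences in `Ψ(π)` of
the factors `HHH, HHU, DHH, DHU`. -/
theorem occC123_eq_factors (n : ℕ) (π : Equiv.Perm (Fin n))
    (h₁ : IsInvolution π) (h₂ : ¬ Contains3412 π) :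
    occC123 π =
      occFactor [Step.H, Step.H, Step.H] (psiWord π) +
      occFactor [Step.H, Step.H, Step.U] (psiWord π) +
      occFactor [Step.D, Step.H, Step.H] (psiWord π) +
      occFactor [Step.D, Step.H, Step.U] (psiWord π) := by
  have hsum : ∑ p ∈ risePatterns, occFactor p (psiWord π) =
      occFactor [Step.H, Step.H, Step.H] (psiWord π) +
      occFactor [Step.H, Step.H, Step.U] (psiWord π) +
      occFactor [Step.D, Step.H, Step.H] (psiWord π) +
      occFactor [Step.D, Step.H, Step.U] (psiWord π) := by
    simp [risePatterns, sum_insert, add_assoc]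
  rw [← hsum, sum_occFactor_eq_card _ length_of_mem_risePatterns, occC123]
  congr 1
  ext i
  simpa only [mem_filter, mem_range, and_assoc] using occC123_at_iff_mem_risePatterns h₁ h₂ i
end

section
/- Let π ∈ I_n(3412). Then the number of occurrences of the consecutive pattern 132 in π (indices i with π_i < π_{i+2} < π_{i+1}) equals the total number of occurrences in the Motzkin path Ψ(π) of the two-letter factors DU and HU. -/
open scoped Classical

/-! An involution whose arcs `(x, π x)` and `(y, π y)` cross, `x < y < π x < π y`, contains
`3412` at the positions `x, y, π x, π y`; so the arcs of `π ∈ I_n(3412)` are noncrossing, and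
`π` maps every point strictly under an arc strictly under the same arc. Consequently, if `i + 1`
opens an arc `(i + 1, b)` then `i + 1 ≤ π (i + 2) < b`, and `π i < π (i + 2) < π (i + 1)` holds
exactly when step `i` of `Ψ(π)` is `D` or `H` and step `i + 1` is `U`. -/

section Involution

variable {n : ℕ} {π : Equiv.Perm (Fin n)}

lemma pv_of_lt_s11 {j : ℕ} (h : j < n) : pv π j = π ⟨j, h⟩ := dif_pos h

lemma pv_lt {j : ℕ} (h : j < n) : pv π j < n := by
  rw [pv_of_lt_s11 h]
  exact Fin.isLt _

lemma lt_of_lt_pv {j k : ℕ} (h : k < pv π j) : j < n := by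
  by_contra hj
  simp [pv, hj] at h

lemma IsInvolution.pv_pv (hπ : IsInvolution π) {j : ℕ} (h : j < n) : pv π (pv π j) = j := by
  rw [pv_of_lt_s11 (pv_lt h)]
  simp only [pv_of_lt_s11 h, Fin.eta]
  exact congrArg Fin.val (hπ _)

lemma IsInvolution.contains3412_of_crossing (hπ : IsInvolution π) {x y : ℕ} (hxy : x < y)
    (hy : y < pv π x) (h : pv π x < pv π y) : Contains3412 π := by
  have hx : x < n := lt_of_lt_pv hy
  have hyn : y < n := lt_of_lt_pv h
  refine ⟨⟨x, hx⟩, ⟨y, hyn⟩, ⟨pv π x, pv_lt hx⟩, ⟨pv π y, pv_lt hyn⟩, hxy, hy, h, ?_, ?_, ?_⟩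
  all_goals
    simp only [Fin.lt_def, ← pv_of_lt_s11, hπ.pv_pv hx, hπ.pv_pv hyn]
    assumption

lemma IsInvolution.pv_mem_Ioo (hπ : IsInvolution π) (h3412 : ¬ Contains3412 π) {x y : ℕ}
    (hxy : x < y) (hy : y < pv π x) : x < pv π y ∧ pv π y < pv π x := by
  have hx : x < n := lt_of_lt_pv hy
  have hyn : y < n := by have := pv_lt (π := π) hx; omega
  have hxx := hπ.pv_pv hx
  have hyy := hπ.pv_pv hyn
  have hne_x : pv π y ≠ x := fun h => by rw [h] at hyy; omega
  have hne_px : pv π y ≠ pv π x := fun h => by rw [h, hxx] at hyy; omega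
  constructor
  · by_contra! hle
    exact h3412 (hπ.contains3412_of_crossing (lt_of_le_of_ne hle hne_x) (by omega) (by omega))
  · by_contra! hle
    exact h3412 (hπ.contains3412_of_crossing hxy hy (lt_of_le_of_ne hle (Ne.symm hne_px)))

lemma IsInvolution.pattern132_iff (hπ : IsInvolution π) (h3412 : ¬ Contains3412 π) (i : ℕ) :
    (pv π i ≤ i ∧ i + 1 < pv π (i + 1)) ↔
      (pv π i < pv π (i + 2) ∧ pv π (i + 2) < pv π (i + 1)) := by
  constructor
  · rintro ⟨ha, hb⟩
    have hi : i + 1 < n := lt_of_lt_pv hb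
    suffices i + 1 ≤ pv π (i + 2) ∧ pv π (i + 2) < pv π (i + 1) from ⟨by omega, this.2⟩
    rcases (show i + 2 = pv π (i + 1) ∨ i + 2 < pv π (i + 1) by omega) with hb2 | hb2
    · rw [hb2, hπ.pv_pv hi]
      omega
    · have := hπ.pv_mem_Ioo h3412 (show i + 1 < i + 2 by omega) hb2
      omega
  · rintro ⟨hac, hcb⟩
    have hi : i + 2 < n := lt_of_lt_pv hac
    have hcc := hπ.pv_pv hi
    -- otherwise `i` lies under the arc `(π (i + 2), i + 2)`, forcing `π (i + 2) < π i`
    have hc : i + 1 ≤ pv π (i + 2) := by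
      by_contra! hc
      rcases (show pv π (i + 2) = i ∨ pv π (i + 2) < i by omega) with hci | hci
      · rw [hci] at hcc hac
        omega
      · have := hπ.pv_mem_Ioo h3412 hci (by omega)
        omega
    -- otherwise `i + 1` lies under the arc `(i, π i)`, forcing `π (i + 1) < π i`
    refine ⟨?_, by omega⟩
    by_contra! ha
    have ha' : i + 1 < pv π i := by
      refine lt_of_le_of_ne ha fun h => ?_
      have haa := hπ.pv_pv (show i < n by omega)
      rw [← h] at haa
      omega
    have := hπ.pv_mem_Ioo h3412 (show i < i + 1 by omega) ha'
    omega

end Involution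

lemma List.pair_prefix_drop_iff {α : Type*} (l : List α) (i : ℕ) (a b : α) :
    [a, b] <+: l.drop i ↔ l[i]? = some a ∧ l[i + 1]? = some b := by
  rw [List.prefix_iff_eq_take]
  simp only [List.length_cons, List.length_nil, List.take_add_one, List.getElem?_drop,
    List.take_zero, List.nil_append, zero_add, add_zero]
  rcases l[i]? with _ | x <;> rcases l[i + 1]? with _ | y <;>
    simp [eq_comm (b := a), eq_comm (b := b)]

lemma occFactor_add_occFactor_of_ne {a c : Step} (h : a ≠ c) (p q w : List Step) :
    occFactor (a :: p) w + occFactor (c :: q) w =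
      ((Finset.range w.length).filter fun i => a :: p <+: w.drop i ∨ c :: q <+: w.drop i).card := by
  rw [occFactor, occFactor, ← Finset.card_union_of_disjoint, Finset.filter_or]
  refine Finset.disjoint_filter.2 fun _ _ hp hq => h ?_
  obtain ⟨t, ht⟩ := hp
  obtain ⟨t', ht'⟩ := hq
  rw [← ht', List.cons_append, List.cons_append, List.cons.injEq] at ht
  exact ht.1

lemma psiWord_length {n : ℕ} (π : Equiv.Perm (Fin n)) : (psiWord π).length = n := by
  simp [psiWord]

lemma psiWord_getElem? {n : ℕ} (π : Equiv.Perm (Fin n)) {j : ℕ} (h : j < n) :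
    (psiWord π)[j]? =
      some (if pv π j = j then Step.H else if j < pv π j then Step.U else Step.D) := by
  simp only [psiWord, List.getElem?_ofFn, h, dite_true, pv_of_lt_s11 h, Fin.ext_iff, Fin.lt_def]

lemma psiWord_DU_or_HU_iff {n : ℕ} (π : Equiv.Perm (Fin n)) (i : ℕ) :
    ([Step.D, Step.U] <+: (psiWord π).drop i ∨ [Step.H, Step.U] <+: (psiWord π).drop i) ↔
      pv π i ≤ i ∧ i + 1 < pv π (i + 1) := by
  simp only [List.pair_prefix_drop_iff]
  by_cases hi : i + 1 < n
  · rw [psiWord_getElem? π hi, psiWord_getElem? π (by omega)]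
    split_ifs <;> simp <;> omega
  · have : (psiWord π)[i + 1]? = none := by simp [psiWord_length]; omega
    simp only [this, reduceCtorEq, and_false, or_self, false_iff, not_and]
    exact fun _ h => hi (lt_of_lt_pv h)

/-- For `π ∈ I_n(3412)`: the number of occurrences of the
consecutive pattern 132 in `π` equals the total number of occurrences in `Ψ(π)` of
the factors `DU` and `HU`. -/
theorem occC132_eq_factors (n : ℕ) (π : Equiv.Perm (Fin n))
    (h₁ : IsInvolution π) (h₂ : ¬ Contains3412 π) :
    occC132 π =
      occFactor [Step.D, Step.U] (psiWord π) +
      occFactor [Step.H, Step.U] (psiWord π) := by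
  rw [occFactor_add_occFactor_of_ne (by decide), psiWord_length, occC132]
  congr 1
  ext i
  simp only [Finset.mem_filter, Finset.mem_range, psiWord_DU_or_HU_iff, h₁.pattern132_iff h₂]
  constructor
  · exact fun ⟨hi, h⟩ => ⟨by omega, h⟩
  · exact fun ⟨_, h⟩ => ⟨by have := lt_of_lt_pv (π := π) h.1; omega, h⟩
end

section
/- Let F = F_{321}(x,t,z) ∈ ℚ[[x,t,z]] be the formal power series Σ_{n≥0} Σ_{π ∈ I_n(3412)} x^n t^{k(π)} z^{fix(π)}, where k(π) is the number of occurrences of the consecutive pattern 321 in π. Then a·F² + b·F + c = 0, where a = 2x³zt − 2x⁴z²t + x²t² − 2x³zt² + x⁴z²t² + x⁴z², b = −1 + xz − x³zt − x²t² + x² + x³zt², and c = 1. -/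
open scoped Classical

/-- The generating function `F_{321}(x,t,z) = Σ_{n≥0} Σ_{π ∈ I_n(3412)}
x^n t^{#occurrences of consecutive 321 in π} z^{fix π}`. -/
noncomputable def F321 : MvPowerSeries (Fin 3) ℚ := fun m =>
  ({π : Equiv.Perm (Fin (m 0)) | IsInvolution π ∧ ¬ Contains3412 π ∧
    occC321 π = m 1 ∧ fixCount π = m 2}.ncard : ℚ)

/-- The variable `x`. -/
noncomputable def xV : MvPowerSeries (Fin 3) ℚ := MvPowerSeries.X 0
/-- The variable `t`. -/
noncomputable def tV : MvPowerSeries (Fin 3) ℚ := MvPowerSeries.X 1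
/-- The variable `z`. -/
noncomputable def zV : MvPowerSeries (Fin 3) ℚ := MvPowerSeries.X 2

namespace F321Proof

open Equiv Finset

abbrev Pm (n : ℕ) := Equiv.Perm (Fin n)

/-- Good: involution avoiding 3412. -/
def Good {n : ℕ} (π : Pm n) : Prop := IsInvolution π ∧ ¬ Contains3412 π

section pvLemmas

variable {n : ℕ} (π : Pm n)

lemma pv_def {i : ℕ} (h : i < n) : pv π i = (π ⟨i, h⟩ : Fin n).val := by
  simp [pv, h]

lemma pv_lt {i : ℕ} (h : i < n) : pv π i < n := by
  rw [pv_def π h]; exact (π ⟨i, h⟩).isLt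

lemma pv_junk {i : ℕ} (h : n ≤ i) : pv π i = 0 := by
  simp [pv, Nat.not_lt.mpr h]

lemma pv_inj {i j : ℕ} (hi : i < n) (hj : j < n) (h : pv π i = pv π j) : i = j := by
  rw [pv_def π hi, pv_def π hj] at h
  have := π.injective (Fin.ext h)
  simpa [Fin.ext_iff] using this

lemma perm_ext_pv {π σ : Pm n} (h : ∀ i, pv π i = pv σ i) : π = σ := by
  ext i
  have := h i.val
  rwa [pv_def π i.isLt, pv_def σ i.isLt] at this

lemma isInvolution_iff_pv : IsInvolution π ↔ ∀ i < n, pv π (pv π i) = i := by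
  constructor
  · intro h i hi
    rw [pv_def π hi, pv_def π ((π ⟨i, hi⟩).isLt)]
    simp [h ⟨i, hi⟩]
  · intro h x
    have := h x.val x.isLt
    rw [pv_def π x.isLt, pv_def π ((π x).isLt)] at this
    · exact Fin.ext (by simpa using this)

lemma contains3412_iff_pv : Contains3412 π ↔
    ∃ a b c d : ℕ, a < b ∧ b < c ∧ c < d ∧ d < n ∧
      pv π c < pv π d ∧ pv π d < pv π a ∧ pv π a < pv π b := by
  constructor
  · rintro ⟨i1, i2, i3, i4, h12, h23, h34, p1, p2, p3⟩
    exact ⟨i1, i2, i3, i4, h12, h23, h34, i4.isLt, by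
      rw [pv_def π i3.isLt, pv_def π i4.isLt]; exact p1, by
      rw [pv_def π i4.isLt, pv_def π i1.isLt]; exact p2, by
      rw [pv_def π i1.isLt, pv_def π i2.isLt]; exact p3⟩
  · rintro ⟨a, b, c, d, h12, h23, h34, hd, p1, p2, p3⟩
    have ha : a < n := by omega
    have hb : b < n := by omega
    have hc : c < n := by omega
    refine ⟨⟨a, ha⟩, ⟨b, hb⟩, ⟨c, hc⟩, ⟨d, hd⟩, h12, h23, h34, ?_, ?_, ?_⟩ <;>
      simp only [Fin.lt_def] <;>
      [skip; skip; skip] <;>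
      · rw [← pv_def, ← pv_def] <;> assumption

lemma not_contains3412_of_lt_four (h : n < 4) : ¬ Contains3412 π := by
  rw [contains3412_iff_pv]
  rintro ⟨a, b, c, d, h1, h2, h3, h4, -⟩
  omega

end pvLemmas

end F321Proof
namespace F321Proof

noncomputable section

open Equiv Finset

/-! ### Gluing and restriction of permutations, at the level of `ℕ`-functions -/

/-- The underlying function of the "arc glue": `0 ↦ a+1`, `[1,a]` carries `fα` shifted,
`a+1 ↦ 0`, and the rest carries `fβ` shifted by `a+2`. -/
def glueNat (a : ℕ) (fα fβ : ℕ → ℕ) (i : ℕ) : ℕ :=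
  if i = 0 then a + 1
  else if i ≤ a then fα (i - 1) + 1
  else if i = a + 1 then 0
  else fβ (i - a - 2) + a + 2

def consNat (f : ℕ → ℕ) (i : ℕ) : ℕ := if i = 0 then 0 else f (i - 1) + 1

def subNat (off : ℕ) (f : ℕ → ℕ) (i : ℕ) : ℕ := f (off + i) - off

/-- The glued permutation `U α D β`. -/
def glue {a b : ℕ} (α : Pm a) (β : Pm b) : Pm (a + b + 2) :=
  Equiv.ofBijective
    (fun i => ⟨glueNat a (pv α) (pv β) i.val, by
      have hi := i.isLt
      unfold glueNat
      split_ifs with h0 h1 h2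
      · omega
      · have := pv_lt α (show i.val - 1 < a by omega); omega
      · omega
      · have hb : b ≠ 0 := by omega
        have := pv_lt β (show i.val - a - 2 < b by omega); omega⟩)
    (by
      rw [← Finite.injective_iff_bijective]
      intro i j hij
      have hi := i.isLt; have hj := j.isLt
      simp only [Fin.mk.injEq] at hij
      apply Fin.ext
      unfold glueNat at hij
      split_ifs at hij with h0 h0' h1 h1' h1'' h2 h2' h2'' h3 h3'
      all_goals first
        | omega
        | (exfalso;
           first
             | (have := pv_lt α (show i.val - 1 < a by omega); omega)
             | (have := pv_lt α (show j.val - 1 < a by omega); omega)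
             | (have h1 := pv_lt α (show i.val - 1 < a by omega);
                have h2 := pv_lt β (show j.val - a - 2 < b by omega); omega)
             | (have h1 := pv_lt α (show j.val - 1 < a by omega);
                have h2 := pv_lt β (show i.val - a - 2 < b by omega); omega))
        | (have h1 : i.val - 1 < a := by omega
           have h2 : j.val - 1 < a := by omega
           have := pv_inj α h1 h2 (by omega); omega)
        | (have h1 : i.val - a - 2 < b := by omega
           have h2 : j.val - a - 2 < b := by omega
           have := pv_inj β h1 h2 (by omega); omega))

/-- Prepending a fixed point. -/
def consH {b : ℕ} (β : Pm b) : Pm (b + 1) :=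
  Equiv.ofBijective
    (fun i => ⟨consNat (pv β) i.val, by
      have hi := i.isLt
      unfold consNat
      split_ifs with h0
      · omega
      · have := pv_lt β (show i.val - 1 < b by omega); omega⟩)
    (by
      rw [← Finite.injective_iff_bijective]
      intro i j hij
      simp only [Fin.mk.injEq] at hij
      have hi := i.isLt; have hj := j.isLt
      apply Fin.ext
      unfold consNat at hij
      split_ifs at hij with h0 h0'
      all_goals first
        | omega
        | (have h1 : i.val - 1 < b := by omega
           have h2 : j.val - 1 < b := by omega
           have := pv_inj β h1 h2 (by omega); omega))

/-- Restriction of a permutation to the window `[off, off+a)`, provided it maps this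
window to itself; junk value `1` otherwise. -/
def subPerm (off a : ℕ) {n : ℕ} (π : Pm n) : Pm a :=
  if h : (∀ i < a, off ≤ pv π (off + i) ∧ pv π (off + i) < off + a) ∧ off + a ≤ n then
    Equiv.ofBijective
      (fun i => ⟨subNat off (pv π) i.val, by
        have hi := i.isLt
        have := (h.1 i.val hi)
        unfold subNat; omega⟩)
      (by
        rw [← Finite.injective_iff_bijective]
        intro i j hij
        simp only [Fin.mk.injEq] at hij
        have hi := i.isLt; have hj := j.isLt
        have h1 := h.1 i.val hi; have h2 := h.1 j.val hj
        apply Fin.ext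
        unfold subNat at hij
        have := pv_inj π (show off + i.val < n by omega) (show off + j.val < n by omega)
          (by omega)
        omega)
  else 1

section pvValues

variable {a b n : ℕ} (α : Pm a) (β : Pm b) (π : Pm n)

lemma pv_glue {i : ℕ} (h : i < a + b + 2) :
    pv (glue α β) i = glueNat a (pv α) (pv β) i := by
  rw [pv_def _ h]; rfl

lemma pv_glue_zero : pv (glue α β) 0 = a + 1 := by
  rw [pv_glue α β (by omega)]; rfl

lemma pv_glue_mid {i : ℕ} (h1 : 1 ≤ i) (h2 : i ≤ a) :
    pv (glue α β) i = pv α (i - 1) + 1 := by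
  rw [pv_glue α β (by omega)]
  unfold glueNat
  rw [if_neg (by omega), if_pos h2]

lemma pv_glue_mid' {i : ℕ} (h : i < a) :
    pv (glue α β) (i + 1) = pv α i + 1 := by
  rw [pv_glue_mid α β (by omega) (by omega)]; simp

lemma pv_glue_top : pv (glue α β) (a + 1) = 0 := by
  rw [pv_glue α β (by omega)]
  unfold glueNat
  rw [if_neg (by omega), if_neg (by omega), if_pos rfl]

lemma pv_glue_right {i : ℕ} (h1 : a + 2 ≤ i) (h2 : i < a + b + 2) :
    pv (glue α β) i = pv β (i - a - 2) + a + 2 := by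
  rw [pv_glue α β h2]
  unfold glueNat
  rw [if_neg (by omega), if_neg (by omega), if_neg (by omega)]

lemma pv_glue_right' {i : ℕ} (h : i < b) :
    pv (glue α β) (a + 2 + i) = pv β i + a + 2 := by
  rw [pv_glue_right α β (by omega) (by omega)]
  have h2 : a + 2 + i - a - 2 = i := by omega
  rw [h2]

lemma pv_consH_zero : pv (consH β) 0 = 0 := by
  rw [pv_def _ (by omega)]; rfl

lemma pv_consH {i : ℕ} (h : i < b) : pv (consH β) (i + 1) = pv β i + 1 := by
  rw [pv_def _ (by omega)]
  show consNat (pv β) (i+1) = _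
  unfold consNat
  rw [if_neg (by omega)]
  simp

lemma pv_subPerm (hsub : (∀ i < a, off ≤ pv π (off + i) ∧ pv π (off + i) < off + a) ∧ off + a ≤ n)
    {i : ℕ} (h : i < a) : pv (subPerm off a π) i = pv π (off + i) - off := by
  unfold subPerm
  rw [dif_pos hsub, pv_def _ h]
  rfl

end pvValues

end

end F321Proof
namespace F321Proof

noncomputable section

open Equiv Finset

variable {a b n : ℕ}

/-! ### Involution transfer -/

lemma isInv_glue {α : Pm a} {β : Pm b} (hα : IsInvolution α) (hβ : IsInvolution β) :
    IsInvolution (glue α β) := by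
  rw [isInvolution_iff_pv] at hα hβ ⊢
  intro i hi
  rcases Nat.eq_zero_or_pos i with h0 | h0
  · subst h0
    rw [pv_glue_zero, pv_glue_top]
  rcases Nat.lt_or_ge i (a + 1) with hm | hm
  · have h1 : 1 ≤ i := h0
    have h2 : i ≤ a := by omega
    rw [pv_glue_mid α β h1 h2]
    have hlt : pv α (i - 1) < a := pv_lt α (by omega)
    rw [pv_glue_mid α β (by omega) (by omega)]
    simp only [Nat.add_sub_cancel]
    rw [hα (i - 1) (by omega)]
    omega
  rcases Nat.eq_or_lt_of_le hm with h1 | h1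
  · rw [← h1, pv_glue_top, pv_glue_zero]
  · have h2 : a + 2 ≤ i := h1
    rw [pv_glue_right α β h2 hi]
    have hlt : pv β (i - a - 2) < b := pv_lt β (by omega)
    rw [pv_glue_right α β (by omega) (by omega)]
    have he : pv β (i - a - 2) + a + 2 - a - 2 = pv β (i - a - 2) := by omega
    rw [he, hβ (i - a - 2) (by omega)]
    omega

lemma isInv_consH {β : Pm b} (hβ : IsInvolution β) : IsInvolution (consH β) := by
  rw [isInvolution_iff_pv] at hβ ⊢
  intro i hi
  rcases Nat.eq_zero_or_pos i with h0 | h0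
  · subst h0; rw [pv_consH_zero, pv_consH_zero]
  · obtain ⟨j, rfl⟩ : ∃ j, i = j + 1 := ⟨i - 1, by omega⟩
    rw [pv_consH β (by omega)]
    rw [pv_consH β (pv_lt β (by omega))]
    rw [hβ j (by omega)]

/-! ### Avoidance transfer -/

lemma contains_glue {α : Pm a} {β : Pm b} :
    Contains3412 (glue α β) ↔ Contains3412 α ∨ Contains3412 β := by
  constructor
  · rw [contains3412_iff_pv]
    rintro ⟨i1, i2, i3, i4, h12, h23, h34, h4, p1, p2, p3⟩
    set g := glue α β with hg
    rcases Nat.lt_or_ge i4 (a + 1) with hc | hc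
    · -- everything in the α zone
      left
      have h1pos : 1 ≤ i1 := by
        by_contra h
        have hi1 : i1 = 0 := by omega
        subst hi1
        -- pv g 0 = a+1, pv g i2 ≤ a for i2 ≤ a
        have e0 : pv g 0 = a + 1 := pv_glue_zero α β
        have e2 : pv g i2 = pv α (i2 - 1) + 1 := pv_glue_mid α β (by omega) (by omega)
        have := pv_lt α (show i2 - 1 < a by omega)
        omega
      rw [contains3412_iff_pv]
      refine ⟨i1 - 1, i2 - 1, i3 - 1, i4 - 1, by omega, by omega, by omega, by omega, ?_, ?_, ?_⟩ <;>
      · have e1 : pv g i1 = pv α (i1 - 1) + 1 := pv_glue_mid α β (by omega) (by omega)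
        have e2 : pv g i2 = pv α (i2 - 1) + 1 := pv_glue_mid α β (by omega) (by omega)
        have e3 : pv g i3 = pv α (i3 - 1) + 1 := pv_glue_mid α β (by omega) (by omega)
        have e4 : pv g i4 = pv α (i4 - 1) + 1 := pv_glue_mid α β (by omega) (by omega)
        omega
    · -- i4 is in the top or right zone
      rcases Nat.eq_or_lt_of_le hc with hc1 | hc1
      · -- i4 = a+1 : impossible, pv g i4 = 0
        exfalso
        have e4 : pv g i4 = 0 := by rw [← hc1]; exact pv_glue_top α β
        omega
      · right
        -- pv g i4 ≥ a+2, hence pv g i1 ≥ a+3, hence i1 in right zone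
        have e4 : pv g i4 = pv β (i4 - a - 2) + a + 2 := pv_glue_right α β (by omega) h4
        have h1zone : a + 2 ≤ i1 := by
          by_contra h
          -- value of pv g i1 is at most a+1
          rcases Nat.eq_zero_or_pos i1 with h0 | h0
          · have e1 : pv g i1 = a + 1 := by rw [h0]; exact pv_glue_zero α β
            omega
          rcases Nat.lt_or_ge i1 (a + 1) with hm | hm
          · have e1 : pv g i1 = pv α (i1 - 1) + 1 := pv_glue_mid α β (by omega) (by omega)
            have := pv_lt α (show i1 - 1 < a by omega)
            omega
          · have hi1 : i1 = a + 1 := by omega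
            have e1 : pv g i1 = 0 := by rw [hi1]; exact pv_glue_top α β
            omega
        rw [contains3412_iff_pv]
        refine ⟨i1 - a - 2, i2 - a - 2, i3 - a - 2, i4 - a - 2, by omega, by omega, by omega,
          by omega, ?_, ?_, ?_⟩ <;>
        · have e1 : pv g i1 = pv β (i1 - a - 2) + a + 2 := pv_glue_right α β (by omega) (by omega)
          have e2 : pv g i2 = pv β (i2 - a - 2) + a + 2 := pv_glue_right α β (by omega) (by omega)
          have e3 : pv g i3 = pv β (i3 - a - 2) + a + 2 := pv_glue_right α β (by omega) (by omega)
          omega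
  · rintro (h | h) <;> rw [contains3412_iff_pv] at h ⊢ <;>
      obtain ⟨i1, i2, i3, i4, h12, h23, h34, h4, p1, p2, p3⟩ := h
    · refine ⟨i1 + 1, i2 + 1, i3 + 1, i4 + 1, by omega, by omega, by omega, by omega, ?_, ?_, ?_⟩ <;>
      · have e1 := pv_glue_mid' α β (show i1 < a by omega)
        have e2 := pv_glue_mid' α β (show i2 < a by omega)
        have e3 := pv_glue_mid' α β (show i3 < a by omega)
        have e4 := pv_glue_mid' α β (show i4 < a by omega)
        omega
    · refine ⟨a + 2 + i1, a + 2 + i2, a + 2 + i3, a + 2 + i4, by omega, by omega, by omega,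
        by omega, ?_, ?_, ?_⟩ <;>
      · have e1 := pv_glue_right' α β (show i1 < b by omega)
        have e2 := pv_glue_right' α β (show i2 < b by omega)
        have e3 := pv_glue_right' α β (show i3 < b by omega)
        have e4 := pv_glue_right' α β (show i4 < b by omega)
        omega

lemma contains_consH {β : Pm b} : Contains3412 (consH β) ↔ Contains3412 β := by
  constructor
  · rw [contains3412_iff_pv]
    rintro ⟨i1, i2, i3, i4, h12, h23, h34, h4, p1, p2, p3⟩
    have h1pos : 1 ≤ i1 := by
      by_contra h
      have hi1 : i1 = 0 := by omega
      subst hi1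
      have e0 : pv (consH β) 0 = 0 := pv_consH_zero β
      omega
    rw [contains3412_iff_pv]
    refine ⟨i1 - 1, i2 - 1, i3 - 1, i4 - 1, by omega, by omega, by omega, by omega, ?_, ?_, ?_⟩ <;>
    · have e1 : pv (consH β) i1 = pv β (i1 - 1) + 1 := by
        have := pv_consH β (show i1 - 1 < b by omega); simpa [Nat.sub_add_cancel h1pos] using this
      have e2 : pv (consH β) i2 = pv β (i2 - 1) + 1 := by
        have := pv_consH β (show i2 - 1 < b by omega); simpa [Nat.sub_add_cancel (by omega : 1 ≤ i2)] using this
      have e3 : pv (consH β) i3 = pv β (i3 - 1) + 1 := by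
        have := pv_consH β (show i3 - 1 < b by omega); simpa [Nat.sub_add_cancel (by omega : 1 ≤ i3)] using this
      have e4 : pv (consH β) i4 = pv β (i4 - 1) + 1 := by
        have := pv_consH β (show i4 - 1 < b by omega); simpa [Nat.sub_add_cancel (by omega : 1 ≤ i4)] using this
      omega
  · rw [contains3412_iff_pv, contains3412_iff_pv]
    rintro ⟨i1, i2, i3, i4, h12, h23, h34, h4, p1, p2, p3⟩
    refine ⟨i1 + 1, i2 + 1, i3 + 1, i4 + 1, by omega, by omega, by omega, by omega, ?_, ?_, ?_⟩ <;>
    · have e1 := pv_consH β (show i1 < b by omega)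
      have e2 := pv_consH β (show i2 < b by omega)
      have e3 := pv_consH β (show i3 < b by omega)
      have e4 := pv_consH β (show i4 < b by omega)
      omega

/-! ### Closure lemmas -/

lemma pv_top_of_inv {π : Pm n} (hπ : IsInvolution π) (ha : pv π 0 = a + 1) (hn : a + 2 ≤ n) :
    pv π (a + 1) = 0 := by
  rw [isInvolution_iff_pv] at hπ
  have := hπ 0 (by omega)
  rwa [ha] at this

lemma closure_left {π : Pm n} (hπ : Good π) (ha : pv π 0 = a + 1) (hn : a + 2 ≤ n) :
    ∀ i, 1 ≤ i → i ≤ a → 1 ≤ pv π i ∧ pv π i ≤ a := by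
  intro i h1 h2
  obtain ⟨hinv, havoid⟩ := hπ
  have htop : pv π (a + 1) = 0 := pv_top_of_inv hinv ha hn
  rw [isInvolution_iff_pv] at hinv
  have hne0 : pv π i ≠ 0 := by
    intro h
    have := pv_inj π (show i < n by omega) (show a + 1 < n by omega) (by rw [h, htop])
    omega
  have hnea1 : pv π i ≠ a + 1 := by
    intro h
    have := pv_inj π (show i < n by omega) (show 0 < n by omega) (by rw [h, ha])
    omega
  by_contra hcon
  push_neg at hcon
  have hv : a + 2 ≤ pv π i := by
    rcases Nat.lt_or_ge (pv π i) (a + 2) with h | h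
    · exfalso; exact absurd (hcon (by omega)) (by omega)
    · exact h
  -- 3412 occurrence at (0, i, a+1, pv π i)
  apply havoid
  rw [contains3412_iff_pv]
  refine ⟨0, i, a + 1, pv π i, by omega, by omega, by omega, pv_lt π (by omega), ?_, ?_, ?_⟩
  · rw [htop, hinv i (by omega)]; omega
  · rw [hinv i (by omega), ha]; omega
  · rw [ha]; omega

lemma closure_right {π : Pm n} (hπ : Good π) (ha : pv π 0 = a + 1) (hn : a + 2 ≤ n) :
    ∀ i, a + 2 ≤ i → i < n → a + 2 ≤ pv π i := by
  intro i h1 h2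
  have hinv := hπ.1
  have htop : pv π (a + 1) = 0 := pv_top_of_inv hinv ha hn
  have hinv' := hinv
  rw [isInvolution_iff_pv] at hinv'
  have hne0 : pv π i ≠ 0 := by
    intro h
    have := pv_inj π h2 (show a + 1 < n by omega) (by rw [h, htop])
    omega
  have hnea1 : pv π i ≠ a + 1 := by
    intro h
    have := pv_inj π h2 (show 0 < n by omega) (by rw [h, ha])
    omega
  by_contra hcon
  push_neg at hcon
  -- then u := pv π i ∈ [1,a], and pv π u = i ≥ a+2 contradicts closure_left
  have hu1 : 1 ≤ pv π i := by omega
  have hu2 : pv π i ≤ a := by omega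
  have := (closure_left hπ ha hn (pv π i) hu1 hu2).2
  rw [hinv' i h2] at this
  omega

/-! ### Descent lemmas -/

lemma start_descent {α : Pm a} (hα : Good α) (ha : 2 ≤ a) :
    pv α 1 < pv α 0 ↔ 0 < pv α 0 := by
  obtain ⟨hinv, havoid⟩ := hα
  rw [isInvolution_iff_pv] at hinv
  constructor
  · intro h; omega
  · intro h
    have hne : pv α 1 ≠ pv α 0 := fun he => by
      have := pv_inj α (show 1 < a by omega) (show 0 < a by omega) he; omega
    by_contra hcon
    push_neg at hcon
    have hgt : pv α 0 < pv α 1 := by omega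
    -- j := pv α 0 ≥ 1; if j = 1 then pv α 1 = 0 contradiction
    by_cases hj : pv α 0 = 1
    · have h0 : pv α (pv α 0) = 0 := hinv 0 (by omega)
      rw [hj] at h0
      omega
    · -- j ≥ 2 : occurrence (0, 1, j, v)
      apply havoid
      rw [contains3412_iff_pv]
      refine ⟨0, 1, pv α 0, pv α 1, by omega, by omega, hgt, pv_lt α (by omega), ?_, ?_, ?_⟩
      · rw [hinv 0 (by omega), hinv 1 (by omega)]; omega
      · rw [hinv 1 (by omega)]; omega
      · omega

lemma end_descent {α : Pm a} (hα : Good α) (ha : 2 ≤ a) :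
    pv α (a - 1) < pv α (a - 2) ↔ pv α (a - 1) < a - 1 := by
  obtain ⟨hinv, havoid⟩ := hα
  rw [isInvolution_iff_pv] at hinv
  have hne : pv α (a - 2) ≠ pv α (a - 1) := fun he => by
    have := pv_inj α (show a - 2 < a by omega) (show a - 1 < a by omega) he; omega
  constructor
  · intro h
    have := pv_lt α (show a - 2 < a by omega)
    omega
  · intro h
    by_contra hcon
    push_neg at hcon
    have hq : pv α (a - 2) < pv α (a - 1) := by omega
    -- p := pv α (a-1), q := pv α (a-2), q < p
    rcases Nat.eq_or_lt_of_le (Nat.le_of_lt_succ (by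
      have := pv_lt α (show a - 1 < a by omega); omega : pv α (a - 1) < a - 1 + 1)) with h1 | h1
    · omega
    · -- p < a - 1 strict; check p = a - 2?
      rcases Nat.eq_or_lt_of_le (show pv α (a - 1) ≤ a - 2 by omega) with hp | hp
      · -- p = a-2 : then pv α (a-2) = a-1 > p, contradiction with hq < and hcon
        have : pv α (pv α (a - 1)) = a - 1 := hinv (a - 1) (by omega)
        rw [hp] at this
        omega
      · -- p < a-2 : occurrence (q, p, a-2, a-1)
        apply havoid
        rw [contains3412_iff_pv]
        refine ⟨pv α (a - 2), pv α (a - 1), a - 2, a - 1, hq, by omega, by omega, by omega,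
          ?_, ?_, ?_⟩
        · exact hq
        · rw [hinv (a - 2) (by omega)]; omega
        · rw [hinv (a - 2) (by omega), hinv (a - 1) (by omega)]; omega

end

end F321Proof
namespace F321Proof

noncomputable section

open Equiv Finset

variable {a b n : ℕ}

/-! ### Statistics -/

/-- Descent-descent indicator. -/
def dd (x y z : ℕ) : ℕ := if z < y ∧ y < x then 1 else 0

def dInd {n : ℕ} (π : Pm n) (i : ℕ) : ℕ := dd (pv π i) (pv π (i + 1)) (pv π (i + 2))

/-- Indicator that the last position is the larger entry of an arc. -/
def eInd {n : ℕ} (π : Pm n) : ℕ := if pv π (n - 1) < n - 1 then 1 else 0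

/-- Indicator that the first position is the smaller entry of an arc. -/
def sInd {n : ℕ} (π : Pm n) : ℕ := if 0 < pv π 0 then 1 else 0

def oneInd (n : ℕ) : ℕ := if n = 1 then 1 else 0

def statE {n : ℕ} (π : Pm n) : ℕ := occC321 π + eInd π

def statA {n : ℕ} (π : Pm n) : ℕ := occC321 π + sInd π + eInd π + oneInd n

def statE' {n : ℕ} (π : Pm n) : ℕ := statE π + (if n = 0 then 1 else 0)

lemma dd_shift (x y z : ℕ) : dd (x + 1) (y + 1) (z + 1) = dd x y z := by
  unfold dd
  exact if_congr (by omega) rfl rfl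

lemma occC321_eq_sum (π : Pm n) : occC321 π = ∑ i ∈ range (n - 2), dInd π i := by
  unfold occC321
  rw [Finset.card_filter]
  refine Finset.sum_congr rfl fun i hi => ?_
  unfold dInd dd
  exact if_congr (by omega) rfl rfl

lemma fixCount_eq_sum (π : Pm n) : fixCount π = ∑ i ∈ range n, if pv π i = i then 1 else 0 := by
  unfold fixCount
  rw [Finset.card_filter, ← Fin.sum_univ_eq_sum_range]
  refine Finset.sum_congr rfl fun i _ => ?_
  have h : (π i = i) ↔ (pv π i.val = i.val) := by
    rw [pv_def π i.isLt]
    constructor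
    · intro h; rw [show (⟨i.val, i.isLt⟩ : Fin n) = i from rfl, h]
    · intro h; exact Fin.ext (by simpa using h)
  exact if_congr h rfl rfl

lemma sum_range_split {M : Type*} [AddCommMonoid M] (f : ℕ → M) {n m k : ℕ} (h : n = m + k) :
    ∑ i ∈ range n, f i = (∑ i ∈ range m, f i) + ∑ i ∈ range k, f (m + i) := by
  subst h
  induction k with
  | zero => simp
  | succ k ih => rw [← Nat.add_assoc, Finset.sum_range_succ, ih, Finset.sum_range_succ,
      add_assoc]

lemma eInd_of_zero (β : Pm 0) : eInd β = 0 := by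
  unfold eInd
  rw [if_neg (by omega)]

lemma occ_of_small (h : n ≤ 2) (π : Pm n) : occC321 π = 0 := by
  rw [occC321_eq_sum, show n - 2 = 0 by omega]
  simp

/-! ### Statistics of `glue` -/

section glueStats

variable (α : Pm a) (β : Pm b)

lemma dInd_glue_mid {i : ℕ} (h : i + 2 < a) : dInd (glue α β) (i + 1) = dInd α i := by
  unfold dInd
  rw [pv_glue_mid' α β (by omega), show i + 1 + 1 = (i + 1) + 1 from rfl,
    pv_glue_mid' α β (show i + 1 < a by omega),
    show i + 1 + 2 = (i + 2) + 1 by omega, pv_glue_mid' α β (show i + 2 < a by omega)]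
  exact dd_shift _ _ _

lemma sum_dInd_glue_left (hα : Good α) :
    ∑ i ∈ range a, dInd (glue α β) i = statA α := by
  have hA0 : occC321 α = ∑ i ∈ range (a - 2), dInd α i := occC321_eq_sum α
  rcases Nat.lt_or_ge a 2 with ha | ha
  · interval_cases a
    · -- a = 0
      simp [statA, occC321, sInd, eInd, oneInd, pv, Nat.le_zero]
    · -- a = 1
      rw [Finset.sum_range_one]
      have h0 : pv (glue α β) 0 = 2 := pv_glue_zero α β
      have h1 : pv (glue α β) 1 = pv α 0 + 1 := pv_glue_mid α β (by omega) (by omega)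
      have h2 : pv (glue α β) 2 = 0 := pv_glue_top α β
      have hv : pv α 0 = 0 := by have := pv_lt α (show 0 < 1 by omega); omega
      unfold dInd dd
      rw [show (0:ℕ)+1 = 1 from rfl, show (0:ℕ)+2 = 2 from rfl, h0, h1, h2, hv]
      simp [statA, occC321, sInd, eInd, oneInd, hv]
  · -- a ≥ 2
    rw [sum_range_split _ (show a = 1 + ((a - 2) + 1) by omega), Finset.sum_range_one,
      Finset.sum_range_succ]
    have e0 : dInd (glue α β) 0 = sInd α := by
      unfold dInd dd sInd
      rw [show (0:ℕ)+1 = 0+1 from rfl, pv_glue_zero α β, pv_glue_mid' α β (show 0 < a by omega),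
        show (0:ℕ)+2 = 1+1 by rfl, pv_glue_mid' α β (show 1 < a by omega)]
      have hlt : pv α 0 < a := pv_lt α (by omega)
      have hsd := start_descent hα ha
      exact if_congr (by omega) rfl rfl
    have emid : ∑ i ∈ range (a - 2), dInd (glue α β) (1 + i) = ∑ i ∈ range (a - 2), dInd α i := by
      refine Finset.sum_congr rfl fun i hi => ?_
      rw [Finset.mem_range] at hi
      rw [show 1 + i = i + 1 by omega]
      exact dInd_glue_mid α β (by omega)
    have eend : dInd (glue α β) (1 + (a - 2)) = eInd α := by
      unfold dInd dd eInd
      rw [show 1 + (a - 2) = (a - 2) + 1 by omega,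
        pv_glue_mid' α β (show a - 2 < a by omega),
        show (a - 2) + 1 + 1 = (a - 1) + 1 by omega,
        pv_glue_mid' α β (show a - 1 < a by omega),
        show (a - 2) + 1 + 2 = a + 1 by omega,
        pv_glue_top α β]
      have hed := end_descent hα ha
      exact if_congr (by omega) rfl rfl
    rw [e0, emid, eend]
    have hA : statA α = occC321 α + sInd α + eInd α + (if a = 1 then 1 else 0) := rfl
    rw [if_neg (by omega)] at hA
    omega

lemma sum_dInd_glue_right :
    ∑ i ∈ range b, dInd (glue α β) (a + i) = occC321 β := by
  have hB0 : occC321 β = ∑ i ∈ range (b - 2), dInd β i := occC321_eq_sum β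
  have hzero : dInd (glue α β) a = 0 := by
    unfold dInd dd
    rw [pv_glue_top α β, if_neg (by omega)]
  rcases Nat.lt_or_ge b 2 with hb | hb
  · interval_cases b
    · simp [occC321]
    · rw [Finset.sum_range_one]
      simp only [Nat.add_zero]
      rw [hzero, occ_of_small (by omega)]
  · rw [sum_range_split _ (show b = 2 + (b - 2) by omega)]
    have e2 : ∑ i ∈ range 2, dInd (glue α β) (a + i) = 0 := by
      rw [Finset.sum_range_succ, Finset.sum_range_one]
      simp only [Nat.add_zero]
      rw [hzero]
      have h1 : dInd (glue α β) (a + 1) = 0 := by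
        unfold dInd dd
        rw [show a + 1 + 1 = a + 2 + 0 by omega, pv_glue_right' α β (show 0 < b by omega),
          pv_glue_top α β, if_neg (by omega)]
      rw [h1]
    have emid : ∑ i ∈ range (b - 2), dInd (glue α β) (a + (2 + i)) =
        ∑ i ∈ range (b - 2), dInd β i := by
      refine Finset.sum_congr rfl fun i hi => ?_
      rw [Finset.mem_range] at hi
      unfold dInd
      rw [show a + (2 + i) = a + 2 + i by omega, pv_glue_right' α β (show i < b by omega),
        show a + 2 + i + 1 = a + 2 + (i + 1) by omega,
        pv_glue_right' α β (show i + 1 < b by omega),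
        show a + 2 + i + 2 = a + 2 + (i + 2) by omega,
        pv_glue_right' α β (show i + 2 < b by omega)]
      unfold dd
      exact if_congr (by omega) rfl rfl
    rw [e2, emid]
    omega

lemma occ_glue (hα : Good α) : occC321 (glue α β) = statA α + occC321 β := by
  rw [occC321_eq_sum, sum_range_split (dInd (glue α β)) (show a + b + 2 - 2 = a + b by omega),
    sum_dInd_glue_left α β hα, sum_dInd_glue_right α β]

lemma eInd_glue_pos (hb : 0 < b) : eInd (glue α β) = eInd β := by
  have hL : pv (glue α β) (a + b + 2 - 1) = pv β (b - 1) + a + 2 := by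
    rw [show a + b + 2 - 1 = a + 2 + (b - 1) by omega,
      pv_glue_right' α β (show b - 1 < b by omega)]
  unfold eInd
  rw [hL]
  exact if_congr (by omega) rfl rfl

lemma eInd_glue_zero (hb : b = 0) : eInd (glue α β) = 1 := by
  subst hb
  unfold eInd
  rw [show a + 0 + 2 - 1 = a + 1 by omega, pv_glue_top α β, if_pos (by omega)]

lemma sInd_glue : sInd (glue α β) = 1 := by
  unfold sInd
  rw [pv_glue_zero α β, if_pos (by omega)]

lemma statE'_eq : statE' β = occC321 β + eInd β + (if b = 0 then 1 else 0) := rfl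

lemma statE_glue (hα : Good α) : statE (glue α β) = statA α + statE' β := by
  have h1 : statE (glue α β) = occC321 (glue α β) + eInd (glue α β) := rfl
  have h2 := statE'_eq β
  rcases Nat.eq_zero_or_pos b with hb | hb
  · subst hb
    rw [if_pos rfl] at h2
    rw [h1, occ_glue α β hα, eInd_glue_zero α β rfl]
    have h3 := eInd_of_zero β
    omega
  · rw [if_neg (by omega)] at h2
    rw [h1, occ_glue α β hα, eInd_glue_pos α β hb]
    omega

lemma statA_glue (hα : Good α) : statA (glue α β) = 1 + statA α + statE' β := by
  have h1 : statA (glue α β) = occC321 (glue α β) + sInd (glue α β) + eInd (glue α β)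
      + oneInd (a + b + 2) := rfl
  have hone : oneInd (a + b + 2) = 0 := by
    unfold oneInd
    rw [if_neg (by omega)]
  have h2 := statE'_eq β
  rw [h1, hone, occ_glue α β hα, sInd_glue α β]
  rcases Nat.eq_zero_or_pos b with hb | hb
  · subst hb
    rw [if_pos rfl] at h2
    rw [eInd_glue_zero α β rfl]
    have h3 := eInd_of_zero β
    omega
  · rw [if_neg (by omega)] at h2
    rw [eInd_glue_pos α β hb]
    omega

lemma fix_glue : fixCount (glue α β) = fixCount α + fixCount β := by
  rw [fixCount_eq_sum, fixCount_eq_sum α, fixCount_eq_sum β,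
    sum_range_split _ (show a + b + 2 = (a + 1) + (b + 1) by omega)]
  congr 1
  · rw [Finset.sum_range_succ', if_neg (by rw [pv_glue_zero α β]; omega), add_zero]
    refine Finset.sum_congr rfl fun i hi => ?_
    rw [Finset.mem_range] at hi
    rw [pv_glue_mid' α β hi]
    exact if_congr (by omega) rfl rfl
  · rw [Finset.sum_range_succ', if_neg (by rw [add_zero, pv_glue_top α β]; omega), add_zero]
    refine Finset.sum_congr rfl fun i hi => ?_
    rw [Finset.mem_range] at hi
    rw [show a + 1 + (i + 1) = a + 2 + i by omega, pv_glue_right' α β hi]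
    exact if_congr (by omega) rfl rfl

end glueStats

/-! ### Statistics of `consH` -/

section consHStats

variable (β : Pm b)

lemma occ_consH : occC321 (consH β) = occC321 β := by
  rw [occC321_eq_sum, occC321_eq_sum]
  rcases Nat.lt_or_ge b 2 with hb | hb
  · rw [show b + 1 - 2 = 0 by omega, show b - 2 = 0 by omega]
    simp
  · rw [sum_range_split (dInd (consH β)) (show b + 1 - 2 = 1 + (b - 2) by omega),
      Finset.sum_range_one]
    have h0 : dInd (consH β) 0 = 0 := by
      unfold dInd dd
      rw [pv_consH_zero β, if_neg (by omega)]
    have hmid : ∑ i ∈ range (b - 2), dInd (consH β) (1 + i) = ∑ i ∈ range (b - 2), dInd β i := by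
      refine Finset.sum_congr rfl fun i hi => ?_
      rw [Finset.mem_range] at hi
      unfold dInd
      rw [show 1 + i = i + 1 by omega, pv_consH β (show i < b by omega),
        show i + 1 + 1 = (i + 1) + 1 from rfl, pv_consH β (show i + 1 < b by omega),
        show i + 1 + 2 = (i + 2) + 1 by omega, pv_consH β (show i + 2 < b by omega)]
      exact dd_shift _ _ _
    rw [h0, hmid]
    omega

lemma eInd_consH : eInd (consH β) = eInd β := by
  unfold eInd
  rcases Nat.eq_zero_or_pos b with hb | hb
  · subst hb
    rw [show (0:ℕ) + 1 - 1 = 0 by omega, pv_consH_zero β]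
    simp
  · rw [show b + 1 - 1 = (b - 1) + 1 by omega, pv_consH β (show b - 1 < b by omega)]
    exact if_congr (by omega) rfl rfl

lemma statE_consH : statE (consH β) = statE β := by
  unfold statE
  rw [occ_consH β, eInd_consH β]

lemma statA_consH : statA (consH β) = statE' β := by
  have h1 : statA (consH β) = occC321 (consH β) + sInd (consH β) + eInd (consH β)
      + oneInd (b + 1) := rfl
  have hs : sInd (consH β) = 0 := by
    unfold sInd
    rw [pv_consH_zero β, if_neg (by omega)]
  have h2 := statE'_eq β
  have hone : oneInd (b + 1) = (if b = 0 then 1 else 0) := by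
    unfold oneInd
    exact if_congr (by omega) rfl rfl
  rw [h1, hs, occ_consH β, eInd_consH β, hone]
  rcases Nat.eq_zero_or_pos b with hb | hb
  · subst hb
    rw [if_pos rfl] at h2 ⊢
    omega
  · rw [if_neg (by omega)] at h2 ⊢
    omega

lemma fix_consH : fixCount (consH β) = fixCount β + 1 := by
  rw [fixCount_eq_sum, fixCount_eq_sum β, Finset.sum_range_succ', if_pos (pv_consH_zero β)]
  have h : ∀ i ∈ range b, (if pv (consH β) (i + 1) = i + 1 then (1:ℕ) else 0) =
      (if pv β i = i then 1 else 0) := by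
    intro i hi
    rw [Finset.mem_range] at hi
    rw [pv_consH β hi]
    exact if_congr (by omega) rfl rfl
  rw [Finset.sum_congr rfl h]

end consHStats

end

end F321Proof
namespace F321Proof

noncomputable section

open Equiv Finset

variable {a b n m : ℕ}

/-! ### Recasting -/

def recast (m : ℕ) {n : ℕ} (π : Pm n) : Pm m := subPerm 0 m π

lemma recast_eq_self (π : Pm n) : recast n π = π := by
  apply perm_ext_pv
  intro i
  unfold recast
  rcases Nat.lt_or_ge i n with h | h
  · rw [pv_subPerm π ⟨fun j hj => ⟨by omega, by simpa using pv_lt π (show 0 + j < n by omega)⟩,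
      by omega⟩ h]
    simp
  · rw [pv_junk _ h, pv_junk _ h]

lemma pv_recast (h : n = m) (π : Pm n) (i : ℕ) : pv (recast m π) i = pv π i := by
  subst h; rw [recast_eq_self]

lemma good_recast (h : n = m) (π : Pm n) : Good (recast m π) ↔ Good π := by
  subst h; rw [recast_eq_self]

lemma occ_recast (h : n = m) (π : Pm n) : occC321 (recast m π) = occC321 π := by
  subst h; rw [recast_eq_self]

lemma statA_recast (h : n = m) (π : Pm n) : statA (recast m π) = statA π := by
  subst h; rw [recast_eq_self]

lemma statE_recast (h : n = m) (π : Pm n) : statE (recast m π) = statE π := by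
  subst h; rw [recast_eq_self]

lemma statE'_recast (h : n = m) (π : Pm n) : statE' (recast m π) = statE' π := by
  subst h; rw [recast_eq_self]

lemma fix_recast (h : n = m) (π : Pm n) : fixCount (recast m π) = fixCount π := by
  subst h; rw [recast_eq_self]

lemma subPerm_recast (h : n = m) (off k : ℕ) (π : Pm n) :
    subPerm off k (recast m π) = subPerm off k π := by
  subst h; rw [recast_eq_self]

/-! ### Round trips for `consH` -/

lemma hsubH (π : Pm (n + 1)) (h0 : pv π 0 = 0) :
    (∀ i < n, 1 ≤ pv π (1 + i) ∧ pv π (1 + i) < 1 + n) ∧ 1 + n ≤ n + 1 := by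
  refine ⟨fun i hi => ⟨?_, ?_⟩, by omega⟩
  · have hne : pv π (1 + i) ≠ 0 := fun h => by
      have := pv_inj π (show 1 + i < n + 1 by omega) (show 0 < n + 1 by omega) (by rw [h, h0])
      omega
    omega
  · have := pv_lt π (show 1 + i < n + 1 by omega)
    omega

lemma consH_subPerm (π : Pm (n + 1)) (h0 : pv π 0 = 0) : consH (subPerm 1 n π) = π := by
  apply perm_ext_pv
  intro i
  rcases Nat.eq_zero_or_pos i with h | h
  · subst h
    rw [pv_consH_zero, h0]
  rcases Nat.lt_or_ge i (n + 1) with h2 | h2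
  · obtain ⟨j, rfl⟩ : ∃ j, i = j + 1 := ⟨i - 1, by omega⟩
    rw [pv_consH _ (show j < n by omega), pv_subPerm π (hsubH π h0) (show j < n by omega)]
    have h3 := (hsubH π h0).1 j (by omega)
    rw [show 1 + j = j + 1 by omega] at h3 ⊢
    omega
  · rw [pv_junk _ h2, pv_junk _ h2]

lemma subPerm_consH (β : Pm n) : subPerm 1 n (consH β) = β := by
  apply perm_ext_pv
  intro i
  rcases Nat.lt_or_ge i n with h | h
  · have hsub := hsubH (consH β) (pv_consH_zero β)
    rw [pv_subPerm _ hsub h, show 1 + i = i + 1 by omega, pv_consH β h]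
    omega
  · rw [pv_junk _ h, pv_junk _ h]

lemma isInv_consH_iff (β : Pm n) : IsInvolution (consH β) ↔ IsInvolution β := by
  constructor
  · intro h
    rw [isInvolution_iff_pv] at h ⊢
    intro i hi
    have h1 := h (i + 1) (by omega)
    rw [pv_consH β hi] at h1
    rw [pv_consH β (pv_lt β hi)] at h1
    omega
  · exact isInv_consH

lemma good_consH_iff (β : Pm n) : Good (consH β) ↔ Good β := by
  unfold Good
  rw [isInv_consH_iff, contains_consH]

/-! ### Round trips for `glue` -/

lemma hsubA {π : Pm (n + 1)} (hπ : Good π) (ha : pv π 0 = a + 1) :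
    (∀ i < a, 1 ≤ pv π (1 + i) ∧ pv π (1 + i) < 1 + a) ∧ 1 + a ≤ n + 1 := by
  have han : a + 1 < n + 1 := by
    rw [← ha]; exact pv_lt π (by omega)
  refine ⟨fun i hi => ?_, by omega⟩
  have := closure_left hπ ha (by omega) (1 + i) (by omega) (by omega)
  omega

lemma hsubB {π : Pm (n + 1)} (hπ : Good π) (ha : pv π 0 = a + 1) (hb : n + 1 = a + b + 2) :
    (∀ i < b, a + 2 ≤ pv π (a + 2 + i) ∧ pv π (a + 2 + i) < a + 2 + b) ∧
      a + 2 + b ≤ n + 1 := by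
  refine ⟨fun i hi => ⟨?_, ?_⟩, by omega⟩
  · exact closure_right hπ ha (by omega) (a + 2 + i) (by omega) (by omega)
  · have := pv_lt π (show a + 2 + i < n + 1 by omega)
    omega

lemma glue_subPerm {π : Pm (n + 1)} (hπ : Good π) (ha : pv π 0 = a + 1)
    (hb : n + 1 = a + b + 2) :
    recast (n + 1) (glue (subPerm 1 a π) (subPerm (a + 2) b π)) = π := by
  apply perm_ext_pv
  intro i
  rw [pv_recast hb.symm]
  have hA := hsubA hπ ha
  have hB := hsubB hπ ha hb
  rcases Nat.eq_zero_or_pos i with h0 | h0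
  · subst h0
    rw [pv_glue_zero, ha]
  rcases Nat.lt_or_ge i (a + 1) with h1 | h1
  · rw [pv_glue_mid _ _ h0 (by omega), pv_subPerm π hA (show i - 1 < a by omega)]
    have := hA.1 (i - 1) (by omega)
    have he : 1 + (i - 1) = i := by omega
    rw [he] at this ⊢
    omega
  rcases Nat.eq_or_lt_of_le h1 with h2 | h2
  · rw [← h2, pv_glue_top, pv_top_of_inv hπ.1 ha (by omega)]
  rcases Nat.lt_or_ge i (n + 1) with h3 | h3
  · rw [pv_glue_right _ _ (by omega) (by omega), pv_subPerm π hB (show i - a - 2 < b by omega)]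
    have := hB.1 (i - a - 2) (by omega)
    have he : a + 2 + (i - a - 2) = i := by omega
    rw [he] at this ⊢
    omega
  · rw [pv_junk _ (by omega), pv_junk _ (by omega)]

lemma hsubA' (α : Pm a) (β : Pm b) :
    (∀ i < a, 1 ≤ pv (glue α β) (1 + i) ∧ pv (glue α β) (1 + i) < 1 + a) ∧
      1 + a ≤ a + b + 2 := by
  refine ⟨fun i hi => ?_, by omega⟩
  rw [show 1 + i = i + 1 by omega, pv_glue_mid' α β hi]
  have := pv_lt α hi
  omega

lemma hsubB' (α : Pm a) (β : Pm b) :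
    (∀ i < b, a + 2 ≤ pv (glue α β) (a + 2 + i) ∧ pv (glue α β) (a + 2 + i) < a + 2 + b) ∧
      a + 2 + b ≤ a + b + 2 := by
  refine ⟨fun i hi => ?_, by omega⟩
  rw [pv_glue_right' α β hi]
  have := pv_lt β hi
  omega

lemma subPerm_glue_left (α : Pm a) (β : Pm b) : subPerm 1 a (glue α β) = α := by
  apply perm_ext_pv
  intro i
  rcases Nat.lt_or_ge i a with h | h
  · rw [pv_subPerm _ (hsubA' α β) h, show 1 + i = i + 1 by omega, pv_glue_mid' α β h]
    omega
  · rw [pv_junk _ h, pv_junk _ h]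

lemma subPerm_glue_right (α : Pm a) (β : Pm b) : subPerm (a + 2) b (glue α β) = β := by
  apply perm_ext_pv
  intro i
  rcases Nat.lt_or_ge i b with h | h
  · rw [pv_subPerm _ (hsubB' α β) h, pv_glue_right' α β h]
    omega
  · rw [pv_junk _ h, pv_junk _ h]

lemma isInv_glue_iff (α : Pm a) (β : Pm b) :
    IsInvolution (glue α β) ↔ IsInvolution α ∧ IsInvolution β := by
  constructor
  · intro h
    rw [isInvolution_iff_pv] at h
    constructor
    · rw [isInvolution_iff_pv]
      intro i hi
      have h1 := h (i + 1) (by omega)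
      have hv : pv α i < a := pv_lt α hi
      rw [pv_glue_mid' α β hi, show pv α i + 1 = pv α i + 1 from rfl,
        pv_glue_mid' α β hv] at h1
      omega
    · rw [isInvolution_iff_pv]
      intro i hi
      have h1 := h (a + 2 + i) (by omega)
      have hv : pv β i < b := pv_lt β hi
      rw [pv_glue_right' α β hi, show pv β i + a + 2 = a + 2 + pv β i by omega,
        pv_glue_right' α β hv] at h1
      omega
  · exact fun h => isInv_glue h.1 h.2

lemma good_glue_iff (α : Pm a) (β : Pm b) :
    Good (glue α β) ↔ Good α ∧ Good β := by
  unfold Good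
  rw [isInv_glue_iff, contains_glue]
  tauto

end

end F321Proof
namespace F321Proof

noncomputable section

open Equiv Finset

variable {n : ℕ}

/-! ### Counting -/

/-- The set of good involutions with given statistics. -/
def T (s : ∀ k : ℕ, Pm k → ℕ) (n k f : ℕ) : Finset (Pm n) :=
  Finset.univ.filter fun π =>
    IsInvolution π ∧ ¬ Contains3412 π ∧ s n π = k ∧ fixCount π = f

def cnt (s : ∀ k : ℕ, Pm k → ℕ) (n k f : ℕ) : ℕ := (T s n k f).card

/-- `statA` as an explicitly indexed statistic. -/
abbrev statAf : ∀ k : ℕ, Pm k → ℕ := fun _ π => statA π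

lemma mem_T {s : ∀ k : ℕ, Pm k → ℕ} {k f : ℕ} {π : Pm n} :
    π ∈ T s n k f ↔ IsInvolution π ∧ ¬ Contains3412 π ∧ s n π = k ∧ fixCount π = f := by
  unfold T
  simp

lemma mem_T' {s : ∀ k : ℕ, Pm k → ℕ} {k f : ℕ} {π : Pm n} :
    π ∈ T s n k f ↔ Good π ∧ s n π = k ∧ fixCount π = f := by
  rw [mem_T]
  unfold Good
  tauto

lemma fix_pos {π : Pm (n + 1)} (h : pv π 0 = 0) : 1 ≤ fixCount π := by
  rw [fixCount_eq_sum]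
  calc (1 : ℕ) = if pv π 0 = 0 then 1 else 0 := by rw [if_pos h]
    _ ≤ _ := Finset.single_le_sum (f := fun i => if pv π i = i then (1:ℕ) else 0)
        (fun i _ => by positivity) (Finset.mem_range.mpr (by omega))

/-- The H-part of the decomposition. -/
lemma card_H_part (s sH : ∀ k : ℕ, Pm k → ℕ)
    (hH : ∀ (b : ℕ) (β : Pm b), s (b + 1) (consH β) = sH b β) (k f : ℕ) :
    ((T s (n + 1) k f).filter fun π => pv π 0 = 0).card
      = if 1 ≤ f then cnt sH n k (f - 1) else 0 := by
  rcases Nat.eq_zero_or_pos f with hf | hf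
  · subst hf
    rw [if_neg (by omega)]
    rw [Finset.card_eq_zero, Finset.filter_eq_empty_iff]
    intro π hmem
    rw [mem_T'] at hmem
    intro h0
    have := fix_pos h0
    omega
  · rw [if_pos (show 1 ≤ f by omega)]
    apply Finset.card_bij' (fun π _ => subPerm 1 n π) (fun β _ => consH β)
    · -- forward membership
      intro π hπ
      rw [Finset.mem_filter] at hπ
      obtain ⟨hT, h0⟩ := hπ
      rw [mem_T'] at hT
      obtain ⟨hg, hs, hfx⟩ := hT
      have hcs : consH (subPerm 1 n π) = π := consH_subPerm π h0
      rw [mem_T']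
      refine ⟨?_, ?_, ?_⟩
      · rw [← good_consH_iff, hcs]; exact hg
      · have := hH n (subPerm 1 n π)
        rw [hcs] at this
        omega
      · have := fix_consH (subPerm 1 n π)
        rw [hcs] at this
        omega
    · -- backward membership
      intro β hβ
      rw [mem_T'] at hβ
      obtain ⟨hg, hs, hfx⟩ := hβ
      rw [Finset.mem_filter, mem_T']
      refine ⟨⟨?_, ?_, ?_⟩, pv_consH_zero β⟩
      · rw [good_consH_iff]; exact hg
      · rw [hH n β]; exact hs
      · rw [fix_consH β]; omega
    · intro π hπ
      rw [Finset.mem_filter] at hπ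
      exact consH_subPerm π hπ.2
    · intro β _
      exact subPerm_consH β

/-- The fiber map for the U-part. -/
def phi (s : ∀ k : ℕ, Pm k → ℕ) (π : Pm (n + 1)) : ℕ × (ℕ × ℕ) :=
  (pv π 0 - 1, (statA (subPerm 1 (pv π 0 - 1) π), fixCount (subPerm 1 (pv π 0 - 1) π)))

/-- Key facts about a good `π` with `pv π 0 = a + 1`. -/
lemma U_decomp {s sU : ∀ k : ℕ, Pm k → ℕ} {c : ℕ}
    (hU : ∀ (a b : ℕ) (α : Pm a) (β : Pm b), Good α →
      s (a + b + 2) (glue α β) = statA α + sU b β + c)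
    (hrec : ∀ (n m : ℕ) (h : n = m) (π : Pm n), s m (recast m π) = s n π)
    {π : Pm (n + 1)} (hg : Good π) {a : ℕ} (ha : pv π 0 = a + 1) :
    a + 1 ≤ n ∧
    Good (subPerm 1 a π) ∧ Good (subPerm (a + 2) (n - 1 - a) π) ∧
    s (n + 1) π = statA (subPerm 1 a π) + sU (n - 1 - a) (subPerm (a + 2) (n - 1 - a) π) + c ∧
    fixCount π = fixCount (subPerm 1 a π) + fixCount (subPerm (a + 2) (n - 1 - a) π) := by
  have han : a + 1 < n + 1 := by rw [← ha]; exact pv_lt π (by omega)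
  have hb : n + 1 = a + (n - 1 - a) + 2 := by omega
  set b := n - 1 - a with hbdef
  set α := subPerm 1 a π with hα
  set β := subPerm (a + 2) b π with hβ
  have hgs : recast (n + 1) (glue α β) = π := glue_subPerm hg ha hb
  have hgood : Good (glue α β) := by
    rw [← good_recast hb.symm, hgs]; exact hg
  rw [good_glue_iff] at hgood
  refine ⟨by omega, hgood.1, hgood.2, ?_, ?_⟩
  · rw [← hgs, hrec _ _ hb.symm, hU a b α β hgood.1]
  · rw [← hgs, fix_recast hb.symm, fix_glue]

/-- The U-part fiber count. -/
lemma card_U_fiber (s sU : ∀ k : ℕ, Pm k → ℕ) (c : ℕ)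
    (hU : ∀ (a b : ℕ) (α : Pm a) (β : Pm b), Good α →
      s (a + b + 2) (glue α β) = statA α + sU b β + c)
    (hrec : ∀ (n m : ℕ) (h : n = m) (π : Pm n), s m (recast m π) = s n π)
    (k f a k1 f1 : ℕ) (hc : c ≤ k) (ha : a < n) (hk1 : k1 ≤ k - c) (hf1 : f1 ≤ f) :
    (((T s (n + 1) k f).filter fun π => pv π 0 ≠ 0).filter fun π => phi s π = (a, (k1, f1))).card
      = cnt statAf a k1 f1 * cnt sU (n - 1 - a) (k - c - k1) (f - f1) := by
  rw [cnt, cnt, ← Finset.card_product]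
  apply Finset.card_bij' (fun π _ => (subPerm 1 a π, subPerm (a + 2) (n - 1 - a) π))
    (fun q _ => recast (n + 1) (glue q.1 q.2))
  · -- forward membership
    intro π hπ
    rw [Finset.mem_filter, Finset.mem_filter, mem_T'] at hπ
    obtain ⟨⟨⟨hg, hs, hfx⟩, h0⟩, hfib⟩ := hπ
    unfold phi at hfib
    rw [Prod.mk.injEq, Prod.mk.injEq] at hfib
    obtain ⟨hfa, hfk, hff⟩ := hfib
    have ha1 : pv π 0 = a + 1 := by omega
    rw [hfa] at hfk hff
    obtain ⟨han, hgα, hgβ, hdecomp, hfix⟩ := U_decomp hU hrec hg ha1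
    rw [Finset.mem_product]
    constructor
    · rw [mem_T']
      exact ⟨hgα, hfk, hff⟩
    · rw [mem_T']
      refine ⟨hgβ, ?_, ?_⟩
      · show sU (n - 1 - a) (subPerm (a + 2) (n - 1 - a) π) = k - c - k1
        omega
      · show fixCount (subPerm (a + 2) (n - 1 - a) π) = f - f1
        omega
  · -- backward membership
    rintro ⟨α, β⟩ hq
    rw [Finset.mem_product] at hq
    rw [mem_T', mem_T'] at hq
    obtain ⟨⟨hgα, hsα, hfα⟩, hgβ, hsβ, hfβ⟩ := hq
    have hsα' : statA α = k1 := hsα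
    have hfα' : fixCount α = f1 := hfα
    have hsβ' : sU (n - 1 - a) β = k - c - k1 := hsβ
    have hfβ' : fixCount β = f - f1 := hfβ
    have hgα' : Good α := hgα
    have hgβ' : Good β := hgβ
    clear hsα hfα hsβ hfβ hgα hgβ
    have hb : a + (n - 1 - a) + 2 = n + 1 := by omega
    have hπg : Good (recast (n + 1) (glue α β)) := by
      rw [good_recast hb]
      rw [good_glue_iff]
      exact ⟨hgα', hgβ'⟩
    have hpv0 : pv (recast (n + 1) (glue α β)) 0 = a + 1 := by
      rw [pv_recast hb, pv_glue_zero]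
    rw [Finset.mem_filter, Finset.mem_filter, mem_T']
    refine ⟨⟨⟨hπg, ?_, ?_⟩, ?_⟩, ?_⟩
    · show s (n + 1) (recast (n + 1) (glue α β)) = k
      rw [hrec _ _ hb, hU a _ α β hgα']
      omega
    · show fixCount (recast (n + 1) (glue α β)) = f
      rw [fix_recast hb, fix_glue]
      omega
    · show ¬ pv (recast (n + 1) (glue α β)) 0 = 0
      omega
    · unfold phi
      rw [hpv0, Prod.mk.injEq, Prod.mk.injEq]
      refine ⟨by omega, ?_, ?_⟩
      · rw [show a + 1 - 1 = a by omega, subPerm_recast hb 1 a, subPerm_glue_left]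
        exact hsα'
      · rw [show a + 1 - 1 = a by omega, subPerm_recast hb 1 a, subPerm_glue_left]
        exact hfα'
  · -- left inverse
    intro π hπ
    rw [Finset.mem_filter, Finset.mem_filter, mem_T'] at hπ
    obtain ⟨⟨⟨hg, -, -⟩, h0⟩, hfib⟩ := hπ
    unfold phi at hfib
    rw [Prod.mk.injEq] at hfib
    have ha1 : pv π 0 = a + 1 := by
      have := hfib.1
      omega
    exact glue_subPerm hg ha1 (by
      have := pv_lt π (show 0 < n + 1 by omega)
      omega)
  · -- right inverse
    rintro ⟨α, β⟩ hq
    have hb : a + (n - 1 - a) + 2 = n + 1 := by omega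
    rw [Prod.mk.injEq]
    constructor
    · rw [subPerm_recast hb 1 a, subPerm_glue_left]
    · rw [subPerm_recast hb (a + 2) _, subPerm_glue_right]

/-- The U-part total count. -/
lemma card_U_part (s sU : ∀ k : ℕ, Pm k → ℕ) (c : ℕ)
    (hU : ∀ (a b : ℕ) (α : Pm a) (β : Pm b), Good α →
      s (a + b + 2) (glue α β) = statA α + sU b β + c)
    (hrec : ∀ (n m : ℕ) (h : n = m) (π : Pm n), s m (recast m π) = s n π)
    (k f : ℕ) :
    ((T s (n + 1) k f).filter fun π => pv π 0 ≠ 0).card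
      = if c ≤ k then
          ∑ a ∈ range n, ∑ k1 ∈ range (k - c + 1), ∑ f1 ∈ range (f + 1),
            cnt statAf a k1 f1 * cnt sU (n - 1 - a) (k - c - k1) (f - f1)
        else 0 := by
  have hmem : ∀ π ∈ (T s (n + 1) k f).filter fun π => pv π 0 ≠ 0,
      (c ≤ k) ∧ phi s π ∈ range n ×ˢ (range (k - c + 1) ×ˢ range (f + 1)) := by
    intro π hπ
    rw [Finset.mem_filter, mem_T'] at hπ
    obtain ⟨⟨hg, hs, hfx⟩, h0⟩ := hπ
    have ha1 : pv π 0 = (pv π 0 - 1) + 1 := by omega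
    obtain ⟨han, hgα, hgβ, hdecomp, hfix⟩ := U_decomp hU hrec hg ha1
    refine ⟨by omega, ?_⟩
    refine Finset.mem_product.mpr ⟨Finset.mem_range.mpr (show pv π 0 - 1 < n by omega), ?_⟩
    refine Finset.mem_product.mpr ⟨Finset.mem_range.mpr
      (show statA (subPerm 1 (pv π 0 - 1) π) < k - c + 1 by omega),
      Finset.mem_range.mpr (show fixCount (subPerm 1 (pv π 0 - 1) π) < f + 1 by omega)⟩
  rcases Classical.em (c ≤ k) with hc | hc
  · rw [if_pos hc]
    rw [Finset.card_eq_sum_card_fiberwise (f := phi s)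
      (t := range n ×ˢ (range (k - c + 1) ×ˢ range (f + 1))) (fun π hπ => (hmem π hπ).2)]
    rw [Finset.sum_product]
    refine Finset.sum_congr rfl fun a hA => ?_
    rw [Finset.sum_product]
    refine Finset.sum_congr rfl fun k1 hk1 => ?_
    refine Finset.sum_congr rfl fun f1 hf1 => ?_
    rw [Finset.mem_range] at hA hk1 hf1
    exact card_U_fiber s sU c hU hrec k f a k1 f1 hc (by omega) (by omega) (by omega)
  · rw [if_neg hc]
    rw [Finset.card_eq_zero, Finset.filter_eq_empty_iff]
    intro π hπ h0
    exact hc (hmem π (Finset.mem_filter.mpr ⟨hπ, h0⟩)).1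

/-- Master counting recurrence. -/
lemma cnt_rec (s sH sU : ∀ k : ℕ, Pm k → ℕ) (c : ℕ)
    (hH : ∀ (b : ℕ) (β : Pm b), s (b + 1) (consH β) = sH b β)
    (hU : ∀ (a b : ℕ) (α : Pm a) (β : Pm b), Good α →
      s (a + b + 2) (glue α β) = statA α + sU b β + c)
    (hrec : ∀ (n m : ℕ) (h : n = m) (π : Pm n), s m (recast m π) = s n π)
    (k f : ℕ) :
    cnt s (n + 1) k f = (if 1 ≤ f then cnt sH n k (f - 1) else 0)
      + (if c ≤ k then
          ∑ a ∈ range n, ∑ k1 ∈ range (k - c + 1), ∑ f1 ∈ range (f + 1),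
            cnt statAf a k1 f1 * cnt sU (n - 1 - a) (k - c - k1) (f - f1)
        else 0) := by
  rw [cnt, ← Finset.card_filter_add_card_filter_not (p := fun π => pv π 0 = 0)
    (s := T s (n + 1) k f)]
  rw [card_H_part s sH hH k f, card_U_part s sU c hU hrec k f]

end

end F321Proof
namespace F321Proof

noncomputable section

open Equiv Finset MvPowerSeries

/-! ### Power-series encoding -/

def mk3 (x y z : ℕ) : Fin 3 →₀ ℕ :=
  Finsupp.single 0 x + Finsupp.single 1 y + Finsupp.single 2 z

@[simp] lemma mk3_apply0 (x y z : ℕ) : mk3 x y z 0 = x := by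
  simp [mk3, Finsupp.single_apply]

@[simp] lemma mk3_apply1 (x y z : ℕ) : mk3 x y z 1 = y := by
  simp [mk3, Finsupp.single_apply]

@[simp] lemma mk3_apply2 (x y z : ℕ) : mk3 x y z 2 = z := by
  simp [mk3, Finsupp.single_apply]

lemma mk3_ext (m : Fin 3 →₀ ℕ) : m = mk3 (m 0) (m 1) (m 2) := by
  ext i
  fin_cases i <;> simp

lemma eq_mk3_iff {m : Fin 3 →₀ ℕ} {x y z : ℕ} :
    m = mk3 x y z ↔ m 0 = x ∧ m 1 = y ∧ m 2 = z := by
  constructor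
  · rintro rfl
    simp
  · rintro ⟨h0, h1, h2⟩
    rw [mk3_ext m, h0, h1, h2]

lemma mk3_le_iff {m : Fin 3 →₀ ℕ} {x y z : ℕ} :
    mk3 x y z ≤ m ↔ x ≤ m 0 ∧ y ≤ m 1 ∧ z ≤ m 2 := by
  rw [Finsupp.le_def]
  constructor
  · intro h
    exact ⟨by simpa using h 0, by simpa using h 1, by simpa using h 2⟩
  · rintro ⟨h0, h1, h2⟩ i
    fin_cases i <;> simpa

lemma sub_mk3_apply (m : Fin 3 →₀ ℕ) (x y z : ℕ) (i : Fin 3) :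
    (m - mk3 x y z) i = m i - (mk3 x y z) i := Finsupp.tsub_apply m _ i

lemma zero_eq_mk3 : (0 : Fin 3 →₀ ℕ) = mk3 0 0 0 := by
  ext i
  fin_cases i <;> simp

lemma mk3_add (x y z u v w : ℕ) :
    mk3 (x + u) (y + v) (z + w) = mk3 x y z + mk3 u v w := by
  unfold mk3
  simp only [Finsupp.single_add]
  abel

lemma sub_mk3 (m : Fin 3 →₀ ℕ) (x y z : ℕ) :
    m - mk3 x y z = mk3 (m 0 - x) (m 1 - y) (m 2 - z) := by
  rw [eq_mk3_iff]
  refine ⟨?_, ?_, ?_⟩ <;> (rw [sub_mk3_apply]; simp)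

/-- The generating function of a statistic. -/
def Ser (s : ∀ k : ℕ, Pm k → ℕ) : MvPowerSeries (Fin 3) ℚ :=
  fun m => (cnt s (m 0) (m 1) (m 2) : ℚ)

lemma coeff_Ser (s : ∀ k : ℕ, Pm k → ℕ) (m : Fin 3 →₀ ℕ) :
    MvPowerSeries.coeff (R := ℚ) m (Ser s) = (cnt s (m 0) (m 1) (m 2) : ℚ) := rfl

lemma ncard_T (s : ∀ k : ℕ, Pm k → ℕ) (n k f : ℕ) :
    {π : Pm n | IsInvolution π ∧ ¬ Contains3412 π ∧ s n π = k ∧ fixCount π = f}.ncard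
      = cnt s n k f := by
  rw [Set.ncard_eq_toFinset_card', Set.toFinset_setOf]
  unfold cnt T
  congr 1

/-- The three statistics, explicitly indexed. -/
abbrev occf : ∀ k : ℕ, Pm k → ℕ := fun _ π => occC321 π
abbrev statEf : ∀ k : ℕ, Pm k → ℕ := fun _ π => statE π
abbrev statE'f : ∀ k : ℕ, Pm k → ℕ := fun _ π => statE' π

lemma F321_eq_Ser : F321 = Ser occf := by
  funext m
  show ({π : Pm (m 0) | IsInvolution π ∧ ¬ Contains3412 π ∧ occC321 π = m 1 ∧
      fixCount π = m 2}.ncard : ℚ) = _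
  rw [ncard_T occf (m 0) (m 1) (m 2)]
  rfl

/-! ### Coefficients of products -/

lemma coeff_mul_fin3 (φ ψ : MvPowerSeries (Fin 3) ℚ) (m : Fin 3 →₀ ℕ) :
    MvPowerSeries.coeff (R := ℚ) m (φ * ψ) =
      ∑ x ∈ range (m 0 + 1), ∑ y ∈ range (m 1 + 1), ∑ z ∈ range (m 2 + 1),
        (MvPowerSeries.coeff (R := ℚ) (mk3 x y z) φ) *
          (MvPowerSeries.coeff (R := ℚ) (mk3 (m 0 - x) (m 1 - y) (m 2 - z)) ψ) := by
  rw [MvPowerSeries.coeff_mul]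
  have h1 : ∑ p ∈ (range (m 0 + 1) ×ˢ (range (m 1 + 1) ×ˢ range (m 2 + 1))),
      (MvPowerSeries.coeff (R := ℚ) (mk3 p.1 p.2.1 p.2.2) φ) *
        (MvPowerSeries.coeff (R := ℚ) (mk3 (m 0 - p.1) (m 1 - p.2.1) (m 2 - p.2.2)) ψ)
      = ∑ x ∈ range (m 0 + 1), ∑ y ∈ range (m 1 + 1), ∑ z ∈ range (m 2 + 1),
        (MvPowerSeries.coeff (R := ℚ) (mk3 x y z) φ) *
          (MvPowerSeries.coeff (R := ℚ) (mk3 (m 0 - x) (m 1 - y) (m 2 - z)) ψ) := by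
    rw [Finset.sum_product]
    exact Finset.sum_congr rfl fun x _ => by rw [Finset.sum_product]
  rw [← h1]
  apply Finset.sum_nbij' (i := fun p : (Fin 3 →₀ ℕ) × (Fin 3 →₀ ℕ) => (p.1 0, (p.1 1, p.1 2)))
    (j := fun q : ℕ × ℕ × ℕ => (mk3 q.1 q.2.1 q.2.2, m - mk3 q.1 q.2.1 q.2.2))
  · intro p hp
    rw [Finset.HasAntidiagonal.mem_antidiagonal] at hp
    have hc : ∀ i, p.1 i + p.2 i = m i := fun i => by rw [← Finsupp.add_apply, hp]
    have h0 := hc 0; have h1 := hc 1; have h2 := hc 2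
    exact Finset.mem_product.mpr ⟨Finset.mem_range.mpr (show p.1 0 < m 0 + 1 by omega),
      Finset.mem_product.mpr ⟨Finset.mem_range.mpr (show p.1 1 < m 1 + 1 by omega),
        Finset.mem_range.mpr (show p.1 2 < m 2 + 1 by omega)⟩⟩
  · rintro ⟨x, y, z⟩ hq
    rw [Finset.mem_product, Finset.mem_product, Finset.mem_range, Finset.mem_range,
      Finset.mem_range] at hq
    obtain ⟨hx, hy, hz⟩ := hq
    have hx' : x < m 0 + 1 := hx
    have hy' : y < m 1 + 1 := hy
    have hz' : z < m 2 + 1 := hz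
    rw [Finset.HasAntidiagonal.mem_antidiagonal]
    show mk3 x y z + (m - mk3 x y z) = m
    rw [sub_mk3, ← mk3_add, show x + (m 0 - x) = m 0 by omega,
      show y + (m 1 - y) = m 1 by omega, show z + (m 2 - z) = m 2 by omega]
    exact (mk3_ext m).symm
  · intro p hp
    rw [Finset.HasAntidiagonal.mem_antidiagonal] at hp
    have hc : ∀ i, p.1 i + p.2 i = m i := fun i => by rw [← Finsupp.add_apply, hp]
    have h0 := hc 0; have h1 := hc 1; have h2 := hc 2
    have e1 : mk3 (p.1 0) (p.1 1) (p.1 2) = p.1 := (mk3_ext p.1).symm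
    have e2 : m - mk3 (p.1 0) (p.1 1) (p.1 2) = p.2 := by
      rw [sub_mk3, show m 0 - p.1 0 = p.2 0 by omega, show m 1 - p.1 1 = p.2 1 by omega,
        show m 2 - p.1 2 = p.2 2 by omega]
      exact (mk3_ext p.2).symm
    show (mk3 (p.1 0) (p.1 1) (p.1 2), m - mk3 (p.1 0) (p.1 1) (p.1 2)) = p
    rw [e2, e1]
  · rintro ⟨x, y, z⟩ _
    simp
  · intro p hp
    rw [Finset.HasAntidiagonal.mem_antidiagonal] at hp
    have hc : ∀ i, p.1 i + p.2 i = m i := fun i => by rw [← Finsupp.add_apply, hp]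
    have h0 := hc 0; have h1 := hc 1; have h2 := hc 2
    have e1 : mk3 (p.1 0) (p.1 1) (p.1 2) = p.1 := (mk3_ext p.1).symm
    have e2 : mk3 (m 0 - p.1 0) (m 1 - p.1 1) (m 2 - p.1 2) = p.2 := by
      rw [show m 0 - p.1 0 = p.2 0 by omega, show m 1 - p.1 1 = p.2 1 by omega,
        show m 2 - p.1 2 = p.2 2 by omega]
      exact (mk3_ext p.2).symm
    show MvPowerSeries.coeff (R := ℚ) p.1 φ * MvPowerSeries.coeff (R := ℚ) p.2 ψ =
      MvPowerSeries.coeff (R := ℚ) (mk3 (p.1 0) (p.1 1) (p.1 2)) φ *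
        MvPowerSeries.coeff (R := ℚ) (mk3 (m 0 - p.1 0) (m 1 - p.1 1) (m 2 - p.1 2)) ψ
    rw [e1, e2]

/-! ### Base case -/

lemma cnt_zero (s : ∀ k : ℕ, Pm k → ℕ) (k f : ℕ) :
    cnt s 0 k f = if k = s 0 1 ∧ f = 0 then 1 else 0 := by
  have hall : ∀ π : Pm 0, π = 1 := fun π => Equiv.ext fun x => x.elim0
  have hp1 : IsInvolution (1 : Pm 0) := fun x => x.elim0
  have hc1 : ¬ Contains3412 (1 : Pm 0) := not_contains3412_of_lt_four _ (by omega)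
  have hf1 : fixCount (1 : Pm 0) = 0 := by rw [fixCount_eq_sum]; simp
  unfold cnt T
  by_cases h : k = s 0 1 ∧ f = 0
  · rw [if_pos h]
    rw [Finset.card_eq_one]
    refine ⟨1, ?_⟩
    ext π
    rw [Finset.mem_filter, Finset.mem_singleton]
    constructor
    · intro _
      exact hall π
    · rintro rfl
      exact ⟨Finset.mem_univ _, hp1, hc1, h.1.symm, by omega⟩
  · rw [if_neg h]
    rw [Finset.card_eq_zero, Finset.filter_eq_empty_iff]
    intro π _
    rw [hall π]
    rintro ⟨-, -, hs, hf⟩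
    exact h ⟨hs.symm, by omega⟩

end

end F321Proof
namespace F321Proof

noncomputable section

open Equiv Finset MvPowerSeries

/-- Master equation: the generating function of a statistic satisfying the
decomposition rules. -/
lemma master (s sH sU : ∀ k : ℕ, Pm k → ℕ) (c : ℕ)
    (h0 : s 0 1 = 0)
    (hH : ∀ (b : ℕ) (β : Pm b), s (b + 1) (consH β) = sH b β)
    (hU : ∀ (a b : ℕ) (α : Pm a) (β : Pm b), Good α →
      s (a + b + 2) (glue α β) = statA α + sU b β + c)
    (hrec : ∀ (n m : ℕ) (h : n = m) (π : Pm n), s m (recast m π) = s n π) :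
    Ser s = 1 + (monomial (R := ℚ) (mk3 1 0 1)) 1 * Ser sH
      + (monomial (R := ℚ) (mk3 2 c 0)) 1 * (Ser statAf * Ser sU) := by
  apply MvPowerSeries.ext
  intro m
  rw [map_add, map_add, MvPowerSeries.coeff_one,
    MvPowerSeries.coeff_monomial_mul, MvPowerSeries.coeff_monomial_mul,
    coeff_mul_fin3 (Ser statAf) (Ser sU)]
  simp only [coeff_Ser, sub_mk3, mk3_apply0, mk3_apply1, mk3_apply2, Nat.sub_zero,
    mk3_le_iff, one_mul]
  have hm0 : (m = 0) ↔ (m 0 = 0 ∧ m 1 = 0 ∧ m 2 = 0) := by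
    rw [zero_eq_mk3, eq_mk3_iff]
  rcases Nat.eq_zero_or_pos (m 0) with hz | hz
  · -- m 0 = 0
    rw [hz, if_neg (show ¬ (1 ≤ 0 ∧ 0 ≤ m 1 ∧ 1 ≤ m 2) by omega),
      if_neg (show ¬ (2 ≤ 0 ∧ c ≤ m 1 ∧ 0 ≤ m 2) by omega)]
    rw [cnt_zero s, h0]
    by_cases hkf : m 1 = 0 ∧ m 2 = 0
    · rw [if_pos ⟨hkf.1, hkf.2⟩, if_pos (hm0.mpr ⟨hz, hkf.1, hkf.2⟩)]
      norm_num
    · rw [if_neg (by tauto), if_neg (fun h => hkf ⟨(hm0.mp h).2.1, (hm0.mp h).2.2⟩)]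
      norm_num
  · obtain ⟨n', hn⟩ : ∃ n', m 0 = n' + 1 := ⟨m 0 - 1, by omega⟩
    rw [hn]
    have KEY := cnt_rec s sH sU c hH hU hrec (n := n') (m 1) (m 2)
    rw [if_neg (show ¬ m = 0 from fun h => by have := (hm0.mp h).1; omega)]
    have eH : (if 1 ≤ n' + 1 ∧ 0 ≤ m 1 ∧ 1 ≤ m 2 then
          ((cnt sH (n' + 1 - 1) (m 1) (m 2 - 1) : ℕ) : ℚ) else 0)
        = ((if 1 ≤ m 2 then cnt sH n' (m 1) (m 2 - 1) else 0 : ℕ) : ℚ) := by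
      rw [show n' + 1 - 1 = n' by omega]
      by_cases hf : 1 ≤ m 2
      · rw [if_pos ⟨by omega, by omega, hf⟩, if_pos hf]
      · rw [if_neg (by tauto), if_neg hf, Nat.cast_zero]
    have eU : (if 2 ≤ n' + 1 ∧ c ≤ m 1 ∧ 0 ≤ m 2 then
          ∑ x ∈ range (n' + 1 - 2 + 1), ∑ y ∈ range (m 1 - c + 1), ∑ z ∈ range (m 2 + 1),
            ((cnt statAf x y z : ℕ) : ℚ) *
              ((cnt sU (n' + 1 - 2 - x) (m 1 - c - y) (m 2 - z) : ℕ) : ℚ) else 0)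
        = ((if c ≤ m 1 then
            ∑ a ∈ range n', ∑ k1 ∈ range (m 1 - c + 1), ∑ f1 ∈ range (m 2 + 1),
              cnt statAf a k1 f1 * cnt sU (n' - 1 - a) (m 1 - c - k1) (m 2 - f1)
          else 0 : ℕ) : ℚ) := by
      rcases Nat.eq_zero_or_pos n' with hn0 | hn0
      · subst hn0
        rw [if_neg (by omega)]
        split_ifs <;> simp
      · rw [show n' + 1 - 2 = n' - 1 by omega, show n' - 1 + 1 = n' by omega]
        by_cases hc : c ≤ m 1
        · rw [if_pos ⟨by omega, hc, by omega⟩, if_pos hc]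
          push_cast
          rfl
        · rw [if_neg (by tauto), if_neg hc, Nat.cast_zero]
    rw [eH, eU, zero_add, KEY]
    push_cast
    ring

end

end F321Proof
namespace F321Proof

noncomputable section

open Equiv Finset MvPowerSeries

lemma occf_zero : occf 0 (1 : Pm 0) = 0 := occ_of_small (by omega) 1

lemma statEf_zero : statEf 0 (1 : Pm 0) = 0 := by
  show statE 1 = 0
  unfold statE
  rw [occ_of_small (by omega) 1, eInd_of_zero]

lemma statAf_zero : statAf 0 (1 : Pm 0) = 0 := by
  show statA 1 = 0
  unfold statA sInd oneInd
  rw [occ_of_small (by omega) 1, eInd_of_zero]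
  have : pv (1 : Pm 0) 0 = 0 := pv_junk _ (by omega)
  rw [this, if_neg (by omega), if_neg (by omega)]

lemma statE'f_zero : statE'f 0 (1 : Pm 0) = 1 := by
  show statE' 1 = 1
  unfold statE'
  have h : statE (1 : Pm 0) = 0 := statEf_zero
  rw [if_pos rfl]
  show statE 1 + 1 = 1
  omega

/-- The three functional equations. -/
lemma eqF : Ser occf = 1 + (monomial (R := ℚ) (mk3 1 0 1)) 1 * Ser occf
    + (monomial (R := ℚ) (mk3 2 0 0)) 1 * (Ser statAf * Ser occf) :=
  master occf occf occf 0 occf_zero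
    (fun b β => occ_consH β)
    (fun a b α β hα => by
      rw [show occf (a+b+2) (glue α β) = occC321 (glue α β) from rfl, occ_glue α β hα]
      show statA α + occC321 β = statA α + occC321 β + 0
      omega)
    (fun n m h π => occ_recast h π)

lemma eqE : Ser statEf = 1 + (monomial (R := ℚ) (mk3 1 0 1)) 1 * Ser statEf
    + (monomial (R := ℚ) (mk3 2 0 0)) 1 * (Ser statAf * Ser statE'f) :=
  master statEf statEf statE'f 0 statEf_zero
    (fun b β => statE_consH β)
    (fun a b α β hα => by
      rw [show statEf (a+b+2) (glue α β) = statE (glue α β) from rfl, statE_glue α β hα]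
      show statA α + statE' β = statA α + statE' β + 0
      omega)
    (fun n m h π => statE_recast h π)

lemma eqA : Ser statAf = 1 + (monomial (R := ℚ) (mk3 1 0 1)) 1 * Ser statE'f
    + (monomial (R := ℚ) (mk3 2 1 0)) 1 * (Ser statAf * Ser statE'f) :=
  master statAf statE'f statE'f 1 statAf_zero
    (fun b β => statA_consH β)
    (fun a b α β hα => by
      rw [show statAf (a+b+2) (glue α β) = statA (glue α β) from rfl, statA_glue α β hα]
      show 1 + statA α + statE' β = statA α + statE' β + 1
      omega)
    (fun n m h π => statA_recast h π)

/-- The relation between `E'` and `E`. -/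
lemma eqE' : Ser statE'f = Ser statEf + MvPowerSeries.X 1 - 1 := by
  apply MvPowerSeries.ext
  intro m
  rw [map_sub, map_add, MvPowerSeries.coeff_one, MvPowerSeries.coeff_X, coeff_Ser, coeff_Ser]
  have hX : (fun₀ | (1 : Fin 3) => (1 : ℕ)) = mk3 0 1 0 := by
    ext i
    fin_cases i <;> simp [Finsupp.single_apply]
  rw [hX]
  have hm0 : (m = 0) ↔ (m 0 = 0 ∧ m 1 = 0 ∧ m 2 = 0) := by
    rw [zero_eq_mk3, eq_mk3_iff]
  rcases Nat.eq_zero_or_pos (m 0) with hz | hz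
  · rw [hz, cnt_zero statE'f, cnt_zero statEf, statE'f_zero, statEf_zero]
    by_cases h1 : m 1 = 1 ∧ m 2 = 0
    · rw [if_pos ⟨h1.1, h1.2⟩, if_neg (show ¬ (m 1 = 0 ∧ m 2 = 0) by omega),
        if_pos (eq_mk3_iff.mpr ⟨hz, h1.1, h1.2⟩),
        if_neg (fun h => by have := (hm0.mp h).2.1; omega)]
      norm_num
    · rw [if_neg (show ¬ (m 1 = 1 ∧ m 2 = 0) from h1)]
      by_cases h2 : m 1 = 0 ∧ m 2 = 0
      · rw [if_pos ⟨h2.1, h2.2⟩,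
          if_neg (show ¬ m = mk3 0 1 0 from fun h => by
            have := (eq_mk3_iff.mp h).2.1
            have := (eq_mk3_iff.mp h).2.2
            omega),
          if_pos (hm0.mpr ⟨hz, h2.1, h2.2⟩)]
        norm_num
      · rw [if_neg (show ¬ (m 1 = 0 ∧ m 2 = 0) from h2),
          if_neg (show ¬ m = mk3 0 1 0 from fun h => by
            have ha := (eq_mk3_iff.mp h).2.1
            have hb := (eq_mk3_iff.mp h).2.2
            exact h1 ⟨ha, hb⟩),
          if_neg (fun h => h2 ⟨(hm0.mp h).2.1, (hm0.mp h).2.2⟩)]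
        norm_num
  · have hEE : ∀ π : Pm (m 0), statE'f (m 0) π = statEf (m 0) π := by
      intro π
      show statE' π = statE π
      unfold statE'
      rw [if_neg (by omega)]
      omega
    have hcnt : cnt statE'f (m 0) (m 1) (m 2) = cnt statEf (m 0) (m 1) (m 2) := by
      unfold cnt T
      congr 1
      apply Finset.filter_congr
      intro π _
      rw [hEE π]
    rw [hcnt, if_neg (show ¬ m = mk3 0 1 0 from fun h => by
        have := (eq_mk3_iff.mp h).1; omega),
      if_neg (show ¬ m = 0 from fun h => by have := (hm0.mp h).1; omega)]
    ring

/-- Monomial translations. -/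
lemma hxz : xV * zV = (monomial (R := ℚ) (mk3 1 0 1)) 1 := by
  unfold xV zV
  rw [MvPowerSeries.X_def, MvPowerSeries.X_def, MvPowerSeries.monomial_mul_monomial]
  have : (fun₀ | (0 : Fin 3) => 1) + (fun₀ | (2 : Fin 3) => 1) = mk3 1 0 1 := by
    ext i
    fin_cases i <;> simp [mk3, Finsupp.single_apply]
  rw [this, one_mul]

lemma hx2 : xV ^ 2 = (monomial (R := ℚ) (mk3 2 0 0)) 1 := by
  unfold xV
  rw [pow_two, MvPowerSeries.X_def, MvPowerSeries.monomial_mul_monomial]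
  have : (fun₀ | (0 : Fin 3) => 1) + (fun₀ | (0 : Fin 3) => 1) = mk3 2 0 0 := by
    ext i
    fin_cases i <;> simp [mk3, Finsupp.single_apply]
  rw [this, one_mul]

lemma hx2t : xV ^ 2 * tV = (monomial (R := ℚ) (mk3 2 1 0)) 1 := by
  unfold tV
  rw [hx2, MvPowerSeries.X_def, MvPowerSeries.monomial_mul_monomial]
  have : mk3 2 0 0 + (fun₀ | (1 : Fin 3) => 1) = mk3 2 1 0 := by
    ext i
    fin_cases i <;> simp [mk3, Finsupp.single_apply]
  rw [this, one_mul]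

lemma htv : tV = MvPowerSeries.X 1 := rfl

end

end F321Proof

/-- `a·F² + b·F + c = 0` with
`a = 2x³zt − 2x⁴z²t + x²t² − 2x³zt² + x⁴z²t² + x⁴z²`,
`b = −1 + xz − x³zt − x²t² + x² + x³zt²`, `c = 1`. -/
theorem F321_algebraic_equation :
    (2 * xV ^ 3 * zV * tV - 2 * xV ^ 4 * zV ^ 2 * tV + xV ^ 2 * tV ^ 2
        - 2 * xV ^ 3 * zV * tV ^ 2 + xV ^ 4 * zV ^ 2 * tV ^ 2 + xV ^ 4 * zV ^ 2) * F321 ^ 2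
      + (-1 + xV * zV - xV ^ 3 * zV * tV - xV ^ 2 * tV ^ 2 + xV ^ 2
        + xV ^ 3 * zV * tV ^ 2) * F321
      + 1 = 0 := by
  
  classical
  have e1 := F321Proof.eqF
  have e2 := F321Proof.eqE
  have e3 := F321Proof.eqA
  rw [← F321Proof.hxz, ← F321Proof.hx2] at e1 e2
  rw [← F321Proof.hxz, ← F321Proof.hx2t] at e3
  rw [F321Proof.eqE', ← F321Proof.htv] at e2 e3
  rw [F321Proof.F321_eq_Ser]
  set F := F321Proof.Ser F321Proof.occf with hF
  set A := F321Proof.Ser F321Proof.statAf with hA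
  set E := F321Proof.Ser F321Proof.statEf with hE
  linear_combination (xV^2 * F * (xV*zV + tV - xV*zV*tV) * (E + tV - 1) - 1) * e1
    + (2 * xV^2 * F * tV - xV^2 * F * ((xV*zV + tV - xV*zV*tV) * F + tV)) * e2
    + (-(xV^2 * F)) * e3
end
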